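/- arXiv:math/0303026 — 5 statements merged into one kernel-verified Lean document; each statement's English description precedes it below -/
import Mathlib

section
/- Let V be a finite-dimensional real vector space, R_F ⊆ V \ {0} a finite subset with R_F = -R_F, θ : V ≃ V a linear automorphism with θ(R_F) = R_F, and λ ∈ V* a linear functional. Let R₀ = {α ∈ R_F : λ(θ^(-i)(α)) = 0 for all i ∈ ℤ}. Suppose P₀ is a positive system of R₀ satisfying θ(P₀) = P₀. Then there exists a positive system P of R_F such that P₀ ⊆ P and such that for every α ∈ P with θ^(-1)(α) ∉ P one has λ(α) > 0. -/
open Pointwise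

/-- A positive system of a finite symmetric set `S` of nonzero vectors:
a subset `P` with `S = P ∪ (-P)`, `P ∩ (-P) = ∅`, closed under addition within `S`. -/
def IsPositiveSystem {V : Type*} [AddCommGroup V] (S P : Set V) : Prop :=
  P ⊆ S ∧ S = P ∪ (-P) ∧ P ∩ (-P) = ∅ ∧
    ∀ α ∈ P, ∀ β ∈ P, α + β ∈ S → α + β ∈ P

section Aux

variable {V : Type*} [AddCommGroup V] [Module ℝ V] (θ : V ≃ₗ[ℝ] V) (l : V →ₗ[ℝ] ℝ)

/-- The sequence of values `l (θ⁻ⁱ α)` for natural `i`. -/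
private def seqA (α : V) (i : ℕ) : ℝ := l ((θ.symm ^ i) α)

private lemma seqA_add (α β : V) (i : ℕ) :
    seqA θ l (α + β) i = seqA θ l α i + seqA θ l β i := by
  simp [seqA, map_add]

private lemma seqA_neg (α : V) (i : ℕ) : seqA θ l (-α) i = - seqA θ l α i := by
  simp [seqA, map_neg]

private lemma seqA_symm (α : V) (i : ℕ) : seqA θ l (θ.symm α) i = seqA θ l α (i + 1) := by
  show l ((θ.symm ^ i) (θ.symm α)) = l ((θ.symm ^ (i + 1)) α)
  rw [pow_succ]
  rfl

private lemma seqA_zero_eq (α : V) : seqA θ l α 0 = l α := by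
  simp [seqA]

/-- Lexicographic positivity of the sequence. -/
private def LexPosA (α : V) : Prop :=
  ∃ i, (∀ j, j < i → seqA θ l α j = 0) ∧ 0 < seqA θ l α i

private lemma lexposA_add {α β : V} (ha : LexPosA θ l α) (hb : LexPosA θ l β) :
    LexPosA θ l (α + β) := by
  obtain ⟨i, hi0, hip⟩ := ha
  obtain ⟨j, hj0, hjp⟩ := hb
  refine ⟨min i j, fun k hk => ?_, ?_⟩
  · rw [seqA_add, hi0 k (lt_of_lt_of_le hk (min_le_left _ _)),
      hj0 k (lt_of_lt_of_le hk (min_le_right _ _)), add_zero]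
  · rw [seqA_add]
    rcases lt_trichotomy i j with h | h | h
    · rw [min_eq_left h.le, hj0 i h, add_zero]; exact hip
    · subst h; rw [min_self]; exact add_pos hip hjp
    · rw [min_eq_right h.le, hi0 j h, zero_add]; exact hjp

private lemma lexposA_zero_add {α β : V} (ha : ∀ n, seqA θ l α n = 0)
    (hb : LexPosA θ l β) : LexPosA θ l (α + β) := by
  obtain ⟨i, hi0, hip⟩ := hb
  refine ⟨i, fun j hj => ?_, ?_⟩
  · rw [seqA_add, ha j, hi0 j hj, add_zero]
  · rw [seqA_add, ha i, zero_add]; exact hip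

private lemma lexposA_neg_false {α : V} (ha : LexPosA θ l α) (hb : LexPosA θ l (-α)) :
    False := by
  obtain ⟨i, hi0, hip⟩ := ha
  obtain ⟨j, hj0, hjp⟩ := hb
  rw [seqA_neg, neg_pos] at hjp
  rcases lt_trichotomy i j with h | h | h
  · have := hj0 i h; rw [seqA_neg, neg_eq_zero] at this; exact absurd this hip.ne'
  · subst h; exact absurd (hip.trans hjp) (lt_irrefl _)
  · exact absurd (hi0 j h) hjp.ne

private lemma lexposA_of_ne {α : V} (h : ∃ i, seqA θ l α i ≠ 0) :
    LexPosA θ l α ∨ LexPosA θ l (-α) := by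
  classical
  have hi : seqA θ l α (Nat.find h) ≠ 0 := Nat.find_spec h
  have hmin : ∀ j, j < Nat.find h → seqA θ l α j = 0 := fun j hj =>
    not_not.mp (Nat.find_min h hj)
  rcases hi.lt_or_gt with hneg | hpos
  · right
    exact ⟨Nat.find h, fun j hj => by rw [seqA_neg, hmin j hj, neg_zero],
      by rw [seqA_neg]; linarith⟩
  · left; exact ⟨Nat.find h, hmin, hpos⟩

end Aux

/-- Existence of a positive system in good position (Proposition 4.2 of the paper,
abstract form). -/
theorem exists_positive_system_good_position
    {V : Type*} [AddCommGroup V] [Module ℝ V] [FiniteDimensional ℝ V]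
    (R_F : Set V) (hfin : R_F.Finite) (h0 : (0 : V) ∉ R_F) (hsym : -R_F = R_F)
    (θ : V ≃ₗ[ℝ] V) (hθ : θ '' R_F = R_F)
    (l : V →ₗ[ℝ] ℝ)
    (R₀ : Set V)
    (hR₀ : R₀ = {α ∈ R_F | ∀ i : ℤ, l (((θ ^ (-i) : V ≃ₗ[ℝ] V)) α) = 0})
    (P₀ : Set V) (hP₀ : IsPositiveSystem R₀ P₀) (hθP₀ : θ '' P₀ = P₀) :
    ∃ P : Set V, IsPositiveSystem R_F P ∧ P₀ ⊆ P ∧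
      ∀ α ∈ P, θ.symm α ∉ P → 0 < l α := by
  classical
  obtain ⟨hP₀sub, hP₀union, hP₀disj, hP₀add⟩ := hP₀
  -- basic membership facts
  have hRFθ : ∀ α ∈ R_F, θ α ∈ R_F := fun α hα => hθ ▸ Set.mem_image_of_mem θ hα
  have hRFsymm : ∀ α ∈ R_F, θ.symm α ∈ R_F := by
    intro α hα
    rw [← hθ] at hα
    obtain ⟨β, hβ, rfl⟩ := hα
    simpa using hβ
  have hRFneg : ∀ α ∈ R_F, -α ∈ R_F := by
    intro α hα
    rw [← hsym]
    simpa using hα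
  have hRFpow : ∀ (n : ℕ), ∀ α ∈ R_F, (θ ^ n) α ∈ R_F := by
    intro n
    induction n with
    | zero => intro α hα; simpa using hα
    | succ k ih =>
      intro α hα
      have : (θ ^ (k + 1)) α = (θ ^ k) (θ α) := by rw [pow_succ]; rfl
      rw [this]
      exact ih _ (hRFθ α hα)
  -- cancellation
  have key : ∀ (a : ℕ) (x : V), (θ.symm ^ a) ((θ ^ a) x) = x := by
    intro a x
    show ((θ⁻¹) ^ a) ((θ ^ a) x) = x
    rw [inv_pow]
    exact (θ ^ a).symm_apply_apply x
  have zcomp : ∀ (a b : ℤ) (x : V), (θ ^ a) ((θ ^ b) x) = (θ ^ (a + b)) x := by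
    intro a b x; rw [zpow_add]; rfl
  have znat : ∀ (n : ℕ) (x : V), (θ ^ (-(n : ℤ))) x = (θ.symm ^ n) x := by
    intro n x; rw [zpow_neg, zpow_natCast, ← inv_pow]; rfl
  -- periodicity from finiteness
  have hperiod : ∀ α ∈ R_F, ∃ p : ℕ, 0 < p ∧ (θ ^ p) α = α := by
    intro α hα
    haveI : Finite R_F := hfin.to_subtype
    obtain ⟨a, b, hab, heq⟩ :=
      Finite.exists_ne_map_eq_of_infinite (fun n : ℕ => (⟨(θ ^ n) α, hRFpow n α hα⟩ : R_F))
    simp only [Subtype.mk.injEq] at heq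
    rcases hab.lt_or_gt with h | h
    · refine ⟨b - a, by omega, ?_⟩
      have h2 : (θ ^ b) α = (θ ^ a) ((θ ^ (b - a)) α) := by
        have he : θ ^ b = θ ^ a * θ ^ (b - a) := by rw [← pow_add]; congr 1; omega
        rw [he]; rfl
      have h3 := congrArg (θ.symm ^ a) heq.symm
      rw [h2, key, key] at h3
      exact h3
    · refine ⟨a - b, by omega, ?_⟩
      have h2 : (θ ^ a) α = (θ ^ b) ((θ ^ (a - b)) α) := by
        have he : θ ^ a = θ ^ b * θ ^ (a - b) := by rw [← pow_add]; congr 1; omega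
        rw [he]; rfl
      have h3 := congrArg (θ.symm ^ b) heq
      rw [h2, key, key] at h3
      exact h3
  -- "all natural indices vanish" implies membership in R₀
  have hZ_to_R₀ : ∀ α ∈ R_F, (∀ n : ℕ, seqA θ l α n = 0) → α ∈ R₀ := by
    intro α hα hz
    rw [hR₀]
    refine ⟨hα, fun i => ?_⟩
    obtain ⟨p, hp0, hp⟩ := hperiod α hα
    set k : ℕ := (-i).toNat with hk
    -- (θ ^ (k*p)) α = α
    have hnat : ∀ m : ℕ, (θ ^ (m * p)) α = α := by
      intro m
      induction m with
      | zero => simp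
      | succ q ih =>
        have : (q + 1) * p = q * p + p := by ring
        rw [this, pow_add]
        show (θ ^ (q * p)) ((θ ^ p) α) = α
        rw [hp]; exact ih
    have hsymmnat : (θ.symm ^ (k * p)) α = α := by
      have := key (k * p) α
      rwa [hnat k] at this
    have hge : (0 : ℤ) ≤ i + (k * p : ℕ) := by
      have h4 : -i ≤ (k : ℤ) := Int.self_le_toNat _
      have h5 : (k : ℤ) ≤ (k : ℤ) * p := le_mul_of_one_le_right (Int.natCast_nonneg k)
        (by exact_mod_cast hp0)
      push_cast
      linarith
    have h3 : (θ ^ (-i)) α = (θ.symm ^ (i + (k * p : ℕ)).toNat) α := by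
      conv_lhs => rw [← hsymmnat, ← znat (k * p) α, zcomp]
      rw [← znat]
      congr 1
      rw [Int.toNat_of_nonneg hge]
      ring
    rw [h3]
    exact hz _
  have hR₀_to_Z : ∀ α ∈ R₀, ∀ n : ℕ, seqA θ l α n = 0 := by
    intro α hα n
    rw [hR₀] at hα
    have := hα.2 n
    rwa [znat] at this
  have hR₀RF : R₀ ⊆ R_F := by rw [hR₀]; exact Set.sep_subset _ _
  -- the positive system
  set P : Set V := P₀ ∪ {α ∈ R_F | LexPosA θ l α} with hPdef
  have hPsubRF : P ⊆ R_F := by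
    rintro α (hα | hα)
    · exact hR₀RF (hP₀sub hα)
    · exact hα.1
  have hP₀Z : ∀ α ∈ P₀, ∀ n : ℕ, seqA θ l α n = 0 := fun α hα =>
    hR₀_to_Z α (hP₀sub hα)
  refine ⟨P, ⟨hPsubRF, ?_, ?_, ?_⟩, fun α hα => Or.inl hα, ?_⟩
  · -- R_F = P ∪ -P
    apply Set.Subset.antisymm
    · intro α hα
      by_cases hz : ∀ n : ℕ, seqA θ l α n = 0
      · have hα₀ : α ∈ R₀ := hZ_to_R₀ α hα hz
        rw [hP₀union] at hα₀
        rcases hα₀ with h | h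
        · exact Or.inl (Or.inl h)
        · exact Or.inr (by rw [Set.mem_neg]; exact Or.inl (Set.mem_neg.mp h))
      · push_neg at hz
        rcases lexposA_of_ne θ l hz with h | h
        · exact Or.inl (Or.inr ⟨hα, h⟩)
        · exact Or.inr (by rw [Set.mem_neg]; exact Or.inr ⟨hRFneg α hα, h⟩)
    · rintro α (hα | hα)
      · exact hPsubRF hα
      · rw [Set.mem_neg] at hα
        have := hPsubRF hα
        simpa using hRFneg _ this
  · -- P ∩ -P = ∅
    rw [Set.eq_empty_iff_forall_notMem]
    rintro α ⟨hα, hα'⟩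
    rw [Set.mem_neg] at hα'
    rcases hα with h1 | h1 <;> rcases hα' with h2 | h2
    · have : α ∈ P₀ ∩ (-P₀) := ⟨h1, Set.mem_neg.mpr h2⟩
      rw [hP₀disj] at this
      exact this
    · obtain ⟨i, _, hip⟩ := h2.2
      rw [seqA_neg, hP₀Z α h1 i, neg_zero] at hip
      exact lt_irrefl _ hip
    · obtain ⟨i, _, hip⟩ := h1.2
      have := hP₀Z (-α) h2 i
      rw [seqA_neg, neg_eq_zero] at this
      rw [this] at hip
      exact lt_irrefl _ hip
    · exact lexposA_neg_false θ l h1.2 h2.2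
  · -- closure under addition
    rintro α (hα | hα) β (hβ | hβ) hsum
    · -- both in P₀
      have hz : ∀ n : ℕ, seqA θ l (α + β) n = 0 := by
        intro n; rw [seqA_add, hP₀Z α hα n, hP₀Z β hβ n, add_zero]
      exact Or.inl (hP₀add α hα β hβ (hZ_to_R₀ _ hsum hz))
    · exact Or.inr ⟨hsum, lexposA_zero_add θ l (hP₀Z α hα) hβ.2⟩
    · have : β + α ∈ {α ∈ R_F | LexPosA θ l α} :=
        ⟨by rwa [add_comm], lexposA_zero_add θ l (hP₀Z β hβ) hα.2⟩
      rw [add_comm] at this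
      exact Or.inr this
    · exact Or.inr ⟨hsum, lexposA_add θ l hα.2 hβ.2⟩
  · -- good position
    rintro α (hα | hα) hnot
    · -- α ∈ P₀ : impossible, since θ.symm α ∈ P₀
      exfalso
      apply hnot
      have : α ∈ θ '' P₀ := by rw [hθP₀]; exact hα
      obtain ⟨β, hβ, rfl⟩ := this
      exact Or.inl (by simpa using hβ)
    · obtain ⟨hαRF, i, hi0, hip⟩ := hα
      rcases Nat.eq_zero_or_pos i with rfl | hipos
      · rwa [seqA_zero_eq] at hip
      · exfalso
        apply hnot
        refine Or.inr ⟨hRFsymm α hαRF, ⟨i - 1, fun j hj => ?_, ?_⟩⟩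
        · rw [seqA_symm]; exact hi0 (j + 1) (by omega)
        · rw [seqA_symm]
          have : i - 1 + 1 = i := by omega
          rw [this]; exact hip
end

section
/- In the affine root-system setting below, let θ : U → U be an affine bijection permuting the set ℋ of hyperplanes (θ maps ℋ bijectively onto ℋ), let F be a facette with θ(F) = F, let λ ∈ U satisfy α(λ) ∈ ℤ for every α ∈ R, and let 𝒞 be an alcove whose closure contains F. Then t_λ(θ(𝒞)) is an alcove, and the number of hyperplanes H ∈ ℋ separating 𝒞 from t_λ(θ(𝒞)) equals Σ_α |α(λ)| + Σ_{α ∈ R_{F,θ}} |α(λ) − 1|, where the second sum runs over the set R_{F,θ} and the first sum runs over a set of representatives containing exactly one root from each unordered pair {α, −α} ⊆ R such that neither α nor −α belongs to R_{F,θ} (the value |α(λ)| does not depend on the choice of representative). -/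
open Set

/-- The affine hyperplane `H_{α,k} = {x | α x = k}`. -/
def rootHyperplane {U : Type*} [AddCommGroup U] [Module ℝ U]
    (α : U →ₗ[ℝ] ℝ) (k : ℤ) : Set U :=
  {x | α x = (k : ℝ)}

/-- The collection `ℋ` of all affine root hyperplanes of a root system `R`. -/
def rootHyperplanes {U : Type*} [AddCommGroup U] [Module ℝ U]
    (R : Set (U →ₗ[ℝ] ℝ)) : Set (Set U) :=
  {H | ∃ α ∈ R, ∃ k : ℤ, H = rootHyperplane α k}

/-- `C` is an alcove: a connected component of the complement of the union of
the hyperplanes. -/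
def IsAlcove {U : Type*} [AddCommGroup U] [Module ℝ U] [TopologicalSpace U]
    (R : Set (U →ₗ[ℝ] ℝ)) (C : Set U) : Prop :=
  ∃ x ∈ (⋃₀ rootHyperplanes R)ᶜ, C = connectedComponentIn (⋃₀ rootHyperplanes R)ᶜ x

/-- `F` is a facette: an equivalence class of the relation « for every `α ∈ R` and
`k ∈ ℤ`, the numbers `α x - k` and `α y - k` are both zero, both positive or both
negative ». -/
def IsFacette {U : Type*} [AddCommGroup U] [Module ℝ U]
    (R : Set (U →ₗ[ℝ] ℝ)) (F : Set U) : Prop :=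
  ∃ x : U, F = {y | ∀ α ∈ R, ∀ k : ℤ,
    (α x = (k : ℝ) ↔ α y = (k : ℝ)) ∧ ((k : ℝ) < α x ↔ (k : ℝ) < α y)}

/-- The hyperplane `H` separates `C` from `C'`: it is of the form `H_{α,k}` with
`α - k` positive on one of them and negative on the other. -/
def SeparatesIn {U : Type*} [AddCommGroup U] [Module ℝ U]
    (R : Set (U →ₗ[ℝ] ℝ)) (H C C' : Set U) : Prop :=
  ∃ α ∈ R, ∃ k : ℤ, H = rootHyperplane α k ∧
    (((∀ x ∈ C, (k : ℝ) < α x) ∧ (∀ x ∈ C', α x < (k : ℝ))) ∨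
     ((∀ x ∈ C, α x < (k : ℝ)) ∧ (∀ x ∈ C', (k : ℝ) < α x)))


/-!
On an alcove `𝒞` each root `α` has a constant floor `n_𝒞(α) = ⌊α⌋`, and `H_{α,k}` separates
two alcoves `𝒞, 𝒞'` exactly when `k` lies in the half-open interval between `n_𝒞(α)` and
`n_𝒞'(α)`. By reducedness the hyperplanes `H_{α,k}`, with `α` running over one root of each
pair `±α`, are pairwise distinct, so `𝒞` and `𝒞'` are separated by `∑ |n_𝒞'(α) - n_𝒞(α)|`
hyperplanes. For `𝒞' = t_λ θ(𝒞)` one has `n_𝒞'(α) = α(λ) + n_{θ𝒞}(α)`. As `F` lies in the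
closures of both `𝒞` and `θ𝒞`, the floors `n_𝒞(α)` and `n_{θ𝒞}(α)` differ only if some
`H_{α,k} ⊇ F` has one alcove on each side: `n_{θ𝒞}(α) = n_𝒞(α) - 1` for `α ∈ R_{F,θ}`, and
`n_{θ𝒞}(α) = n_𝒞(α)` when neither `α` nor `-α` lies in `R_{F,θ}`.
-/

def IsRootPairTransversal {M : Type*} [Neg M] (R S : Finset M) : Prop :=
  S ⊆ R ∧ (∀ α ∈ R, α ∈ S ∨ -α ∈ S) ∧ ∀ α ∈ S, -α ∉ S

lemma isRootPairTransversal_union {M : Type*} [InvolutiveNeg M] [DecidableEq M]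
    {R A B : Finset M} (hBR : B ⊆ R) (hBneg : ∀ α ∈ B, -α ∉ B) (hAR : A ⊆ R)
    (hAavoid : ∀ α ∈ A, α ∉ B ∧ -α ∉ B)
    (hArep : ∀ α ∈ R, α ∉ B → -α ∉ B → ((α ∈ A ∨ -α ∈ A) ∧ ¬(α ∈ A ∧ -α ∈ A))) :
    IsRootPairTransversal R (A ∪ B) := by
  refine ⟨Finset.union_subset hAR hBR, fun α hα => ?_, fun α hα hneg => ?_⟩
  · simp only [Finset.mem_union]
    by_cases h₁ : α ∈ B
    · exact Or.inl (Or.inr h₁)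
    by_cases h₂ : -α ∈ B
    · exact Or.inr (Or.inr h₂)
    exact (hArep α hα h₁ h₂).1.imp Or.inl Or.inl
  · simp only [Finset.mem_union] at hα hneg
    rcases hα with hα | hα <;> rcases hneg with hneg | hneg
    · exact (hArep α (hAR hα) (hAavoid α hα).1 (hAavoid α hα).2).2 ⟨hα, hneg⟩
    · exact (hAavoid α hα).2 hneg
    · exact (hAavoid _ hneg).2 (by rwa [neg_neg])
    · exact hBneg α hα hneg

section Hyperplanes

variable {U : Type*} [AddCommGroup U] [Module ℝ U]

lemma rootHyperplane_neg_neg (α : U →ₗ[ℝ] ℝ) (k : ℤ) :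
    rootHyperplane (-α) (-k) = rootHyperplane α k := by
  ext x
  simp [rootHyperplane]

lemma rootHyperplane_nonempty {α : U →ₗ[ℝ] ℝ} (hα : α ≠ 0) (k : ℤ) :
    (rootHyperplane α k).Nonempty :=
  LinearMap.surjective_of_ne_zero hα k

lemma rootHyperplane_injective {α : U →ₗ[ℝ] ℝ} (hα : α ≠ 0) :
    Function.Injective (rootHyperplane α) := by
  intro k l h
  obtain ⟨x, hx⟩ := rootHyperplane_nonempty hα k
  have hxl : x ∈ rootHyperplane α l := h ▸ hx
  exact_mod_cast hx.symm.trans hxl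

lemma exists_smul_eq_of_rootHyperplane_eq {α β : U →ₗ[ℝ] ℝ} (hα : α ≠ 0) {k l : ℤ}
    (h : rootHyperplane α k = rootHyperplane β l) : ∃ c : ℝ, β = c • α := by
  obtain ⟨x, hx⟩ := rootHyperplane_nonempty hα k
  have hker : LinearMap.ker α ≤ LinearMap.ker β := by
    intro v hv
    have hxv : x + v ∈ rootHyperplane β l := by
      rw [← h]
      simpa [rootHyperplane, LinearMap.mem_ker.1 hv] using hx
    have hxl : x ∈ rootHyperplane β l := h ▸ hx
    simpa [rootHyperplane, hxl.out] using hxv.out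
  have hspan : β ∈ Submodule.span ℝ (Set.range fun _ : Unit => α) :=
    mem_span_of_iInf_ker_le_ker (by simpa using hker)
  simpa [Submodule.mem_span_singleton, eq_comm] using hspan

lemma image_add_left_rootHyperplane {α : U →ₗ[ℝ] ℝ} {lam : U} {m : ℤ} (hm : α lam = m)
    (k : ℤ) : (fun x => lam + x) '' rootHyperplane α k = rootHyperplane α (k + m) := by
  ext x
  simp only [Set.image_add_left, rootHyperplane, Set.mem_preimage, Set.mem_ofPred_eq, map_add,
    map_neg, hm, Int.cast_add]
  constructor <;> intro h <;> linarith

lemma image_add_left_rootHyperplanes {R : Set (U →ₗ[ℝ] ℝ)} {lam : U}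
    (hlam : ∀ α ∈ R, ∃ m : ℤ, α lam = m) :
    (fun H : Set U => (fun x => lam + x) '' H) '' rootHyperplanes R = rootHyperplanes R := by
  ext H
  constructor
  · rintro ⟨-, ⟨α, hα, k, rfl⟩, rfl⟩
    obtain ⟨m, hm⟩ := hlam α hα
    exact ⟨α, hα, k + m, image_add_left_rootHyperplane hm k⟩
  · rintro ⟨α, hα, k, rfl⟩
    obtain ⟨m, hm⟩ := hlam α hα
    refine ⟨rootHyperplane α (k - m), ⟨α, hα, k - m, rfl⟩, ?_⟩
    exact (image_add_left_rootHyperplane hm _).trans (by rw [sub_add_cancel])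

def SeparatesBy (α : U →ₗ[ℝ] ℝ) (k : ℤ) (C E : Set U) : Prop :=
  ((∀ x ∈ C, (k : ℝ) < α x) ∧ ∀ x ∈ E, α x < k) ∨ ((∀ x ∈ C, α x < k) ∧ ∀ x ∈ E, (k : ℝ) < α x)

lemma separatesBy_neg_neg {α : U →ₗ[ℝ] ℝ} {k : ℤ} {C E : Set U} :
    SeparatesBy (-α) (-k) C E ↔ SeparatesBy α k C E := by
  simp only [SeparatesBy, LinearMap.neg_apply, Int.cast_neg, neg_lt_neg_iff]
  exact or_comm

end Hyperplanes

namespace IsAlcove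

section Topological

variable {U : Type*} [AddCommGroup U] [Module ℝ U] [TopologicalSpace U]
  {R : Set (U →ₗ[ℝ] ℝ)} {C : Set U}

lemma nonempty (hC : IsAlcove R C) : C.Nonempty := by
  obtain ⟨x, hx, rfl⟩ := hC
  exact ⟨x, mem_connectedComponentIn hx⟩

lemma isPreconnected (hC : IsAlcove R C) : IsPreconnected C := by
  obtain ⟨x, -, rfl⟩ := hC
  exact isPreconnected_connectedComponentIn

lemma apply_ne_intCast (hC : IsAlcove R C) {α : U →ₗ[ℝ] ℝ} (hα : α ∈ R) {x : U}
    (hx : x ∈ C) (k : ℤ) : α x ≠ k := by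
  obtain ⟨y, -, rfl⟩ := hC
  exact fun hk => connectedComponentIn_subset _ _ hx ⟨_, ⟨α, hα, k, rfl⟩, hk⟩

lemma image_homeomorph (hC : IsAlcove R C) (e : U ≃ₜ U)
    (he : (fun H : Set U => e '' H) '' rootHyperplanes R = rootHyperplanes R) :
    IsAlcove R (e '' C) := by
  obtain ⟨x, hx, rfl⟩ := hC
  have hW : e '' (⋃₀ rootHyperplanes R)ᶜ = (⋃₀ rootHyperplanes R)ᶜ := by
    rw [Set.image_compl_eq e.bijective, Set.image_sUnion, he]
  exact ⟨e x, hW ▸ Set.mem_image_of_mem e hx, by rw [e.image_connectedComponentIn hx, hW]⟩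

end Topological

section FiniteDimensional

variable {U : Type*} [NormedAddCommGroup U] [NormedSpace ℝ U] [FiniteDimensional ℝ U]
  {R : Set (U →ₗ[ℝ] ℝ)} {C : Set U} {α : U →ₗ[ℝ] ℝ} {c : U}

lemma floor_le_floor (hC : IsAlcove R C) (hα : α ∈ R) {x y : U} (hx : x ∈ C) (hy : y ∈ C) :
    ⌊α x⌋ ≤ ⌊α y⌋ := by
  by_contra! hlt
  have hmem : (⌊α x⌋ : ℝ) ∈ Set.Icc (α y) (α x) := by
    refine ⟨?_, Int.floor_le _⟩
    have : ((⌊α y⌋ + 1 : ℤ) : ℝ) ≤ ⌊α x⌋ := by exact_mod_cast hlt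
    push_cast at this
    linarith [Int.lt_floor_add_one (α y)]
  obtain ⟨z, hz, hzx⟩ := ((hC.isPreconnected.image α
    α.continuous_of_finiteDimensional.continuousOn).ordConnected.out
      (Set.mem_image_of_mem α hy) (Set.mem_image_of_mem α hx)) hmem
  exact hC.apply_ne_intCast hα hz _ hzx

lemma floor_eq (hC : IsAlcove R C) (hα : α ∈ R) {x y : U} (hx : x ∈ C) (hy : y ∈ C) :
    ⌊α x⌋ = ⌊α y⌋ :=
  (hC.floor_le_floor hα hx hy).antisymm (hC.floor_le_floor hα hy hx)

lemma forall_intCast_lt_iff (hC : IsAlcove R C) (hα : α ∈ R) (hc : c ∈ C) (k : ℤ) :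
    (∀ y ∈ C, (k : ℝ) < α y) ↔ k ≤ ⌊α c⌋ := by
  refine ⟨fun h => Int.le_floor.2 (h c hc).le, fun h y hy => ?_⟩
  rw [hC.floor_eq hα hc hy] at h
  exact (Int.le_floor.1 h).lt_of_ne (hC.apply_ne_intCast hα hy k).symm

lemma forall_lt_intCast_iff (hC : IsAlcove R C) (hα : α ∈ R) (hc : c ∈ C) (k : ℤ) :
    (∀ y ∈ C, α y < k) ↔ ⌊α c⌋ < k := by
  refine ⟨fun h => Int.floor_lt.2 (h c hc), fun h y hy => ?_⟩
  rw [hC.floor_eq hα hc hy] at h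
  exact Int.floor_lt.1 h

lemma apply_mem_Icc_of_mem_closure (hC : IsAlcove R C) (hα : α ∈ R) (hc : c ∈ C) {x : U}
    (hx : x ∈ closure C) : α x ∈ Set.Icc (⌊α c⌋ : ℝ) (⌊α c⌋ + 1) := by
  refine closure_minimal (fun y hy => ?_)
    (isClosed_Icc.preimage α.continuous_of_finiteDimensional) hx
  rw [hC.floor_eq hα hc hy]
  exact ⟨Int.floor_le _, (Int.lt_floor_add_one _).le⟩

lemma floor_eq_of_mem_closure (hC : IsAlcove R C) (hα : α ∈ R) (hc : c ∈ C) {x : U}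
    (hx : x ∈ closure C) (hxZ : ∀ k : ℤ, α x ≠ k) : ⌊α c⌋ = ⌊α x⌋ := by
  obtain ⟨h₁, h₂⟩ := hC.apply_mem_Icc_of_mem_closure hα hc hx
  refine (Int.floor_eq_iff.2 ⟨h₁, h₂.lt_of_ne ?_⟩).symm
  exact_mod_cast hxZ (⌊α c⌋ + 1)

lemma floor_mem_Icc_of_mem_closure (hC : IsAlcove R C) (hα : α ∈ R) (hc : c ∈ C) {x : U}
    (hx : x ∈ closure C) {k : ℤ} (hxk : α x = k) : ⌊α c⌋ ∈ Set.Icc (k - 1) k := by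
  obtain ⟨h₁, h₂⟩ := hC.apply_mem_Icc_of_mem_closure hα hc hx
  rw [hxk] at h₁ h₂
  constructor
  · have : ((k - 1 : ℤ) : ℝ) ≤ ⌊α c⌋ := by push_cast; linarith
    exact_mod_cast this
  · exact_mod_cast h₁

end FiniteDimensional

end IsAlcove

section Separation

variable {U : Type*} [NormedAddCommGroup U] [NormedSpace ℝ U] [FiniteDimensional ℝ U]

lemma IsAlcove.separatesBy_iff {R : Set (U →ₗ[ℝ] ℝ)} {C E : Set U} (hC : IsAlcove R C)
    (hE : IsAlcove R E) {α : U →ₗ[ℝ] ℝ} (hα : α ∈ R) {c e : U} (hc : c ∈ C) (he : e ∈ E)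
    (k : ℤ) : SeparatesBy α k C E ↔ k ∈ Finset.Ioc (min ⌊α c⌋ ⌊α e⌋) (max ⌊α c⌋ ⌊α e⌋) := by
  rw [SeparatesBy, hC.forall_intCast_lt_iff hα hc, hE.forall_lt_intCast_iff hα he,
    hC.forall_lt_intCast_iff hα hc, hE.forall_intCast_lt_iff hα he, Finset.mem_Ioc]
  omega

namespace IsRootPairTransversal

variable {R S : Finset (U →ₗ[ℝ] ℝ)} {C E : Set U} {c e : U}

open Classical in
lemma setOf_separatesIn_eq (hS : IsRootPairTransversal R S) (hC : IsAlcove (R : Set _) C)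
    (hE : IsAlcove (R : Set _) E) (hc : c ∈ C) (he : e ∈ E) :
    {H | H ∈ rootHyperplanes (R : Set (U →ₗ[ℝ] ℝ)) ∧ SeparatesIn (R : Set _) H C E} =
      ↑(S.biUnion fun α =>
        (Finset.Ioc (min ⌊α c⌋ ⌊α e⌋) (max ⌊α c⌋ ⌊α e⌋)).image (rootHyperplane α)) := by
  ext H
  simp only [Set.mem_ofPred_eq, Finset.coe_biUnion, Finset.coe_image, Set.mem_iUnion,
    Set.mem_image, Finset.mem_coe, exists_prop]
  constructor
  · rintro ⟨-, β, hβ, l, rfl, hsep⟩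
    rcases hS.2.1 β hβ with hβS | hβS
    · exact ⟨β, hβS, l, (hC.separatesBy_iff hE hβ hc he l).1 hsep, rfl⟩
    · refine ⟨-β, hβS, -l, ?_, rootHyperplane_neg_neg β l⟩
      exact (hC.separatesBy_iff hE (hS.1 hβS) hc he _).1 (separatesBy_neg_neg.2 hsep)
  · rintro ⟨α, hα, k, hk, rfl⟩
    exact ⟨⟨α, hS.1 hα, k, rfl⟩, α, hS.1 hα, k, rfl, (hC.separatesBy_iff hE (hS.1 hα) hc he k).2 hk⟩

lemma ncard_setOf_separatesIn (hR0 : (0 : U →ₗ[ℝ] ℝ) ∉ R)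
    (hreduced : ∀ α ∈ R, ∀ β ∈ R, ∀ c : ℝ, β = c • α → β = α ∨ β = -α)
    (hS : IsRootPairTransversal R S) (hC : IsAlcove (R : Set _) C)
    (hE : IsAlcove (R : Set _) E) (hc : c ∈ C) (he : e ∈ E) :
    ({H | H ∈ rootHyperplanes (R : Set (U →ₗ[ℝ] ℝ)) ∧ SeparatesIn (R : Set _) H C E}.ncard : ℤ)
      = ∑ α ∈ S, |⌊α e⌋ - ⌊α c⌋| := by
  classical
  have hne : ∀ α ∈ S, α ≠ 0 := fun α hα h => hR0 (h ▸ hS.1 hα)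
  have hdisj : (S : Set (U →ₗ[ℝ] ℝ)).PairwiseDisjoint fun α =>
      (Finset.Ioc (min ⌊α c⌋ ⌊α e⌋) (max ⌊α c⌋ ⌊α e⌋)).image (rootHyperplane α) := by
    intro α hα β hβ hαβ
    refine Finset.disjoint_left.2 fun H hHα hHβ => ?_
    obtain ⟨k, -, rfl⟩ := Finset.mem_image.1 hHα
    obtain ⟨l, -, hl⟩ := Finset.mem_image.1 hHβ
    obtain ⟨r, hr⟩ := exists_smul_eq_of_rootHyperplane_eq (hne α hα) hl.symm
    rcases hreduced α (hS.1 hα) β (hS.1 hβ) r hr with rfl | rfl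
    · exact hαβ rfl
    · exact hS.2.2 α hα hβ
  rw [hS.setOf_separatesIn_eq hC hE hc he, Set.ncard_coe_finset, Finset.card_biUnion hdisj,
    Nat.cast_sum]
  refine Finset.sum_congr rfl fun α hα => ?_
  rw [Finset.card_image_of_injective _ (rootHyperplane_injective (hne α hα)), Int.card_Ioc,
    Int.toNat_of_nonneg (sub_nonneg.2 min_le_max), max_sub_min_eq_abs]

end IsRootPairTransversal

end Separation

section Walls

variable {U : Type*} [AddCommGroup U] [Module ℝ U] {R : Set (U →ₗ[ℝ] ℝ)}
  {F C D : Set U} {α : U →ₗ[ℝ] ℝ} {k : ℤ}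

lemma IsFacette.nonempty (hF : IsFacette R F) : F.Nonempty := by
  obtain ⟨x, rfl⟩ := hF
  exact ⟨x, fun _ _ _ => ⟨Iff.rfl, Iff.rfl⟩⟩

lemma IsFacette.apply_eq_of_apply_eq (hF : IsFacette R F) (hα : α ∈ R) {x y : U} (hx : x ∈ F)
    (hy : y ∈ F) (hxk : α x = k) : α y = k := by
  obtain ⟨z, rfl⟩ := hF
  exact (hy α hα k).1.1 ((hx α hα k).1.2 hxk)

def IsWallThrough (F : Set U) (α : U →ₗ[ℝ] ℝ) (k : ℤ) (C D : Set U) : Prop :=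
  (∀ x ∈ F, α x = k) ∧ (∀ x ∈ C, (k : ℝ) < α x) ∧ ∀ x ∈ D, α x < k

lemma isWallThrough_neg_neg :
    IsWallThrough F (-α) (-k) C D ↔ IsWallThrough F α k D C := by
  simp only [IsWallThrough, LinearMap.neg_apply, Int.cast_neg, neg_inj, neg_lt_neg_iff]
  tauto

lemma not_exists_isWallThrough_neg (hF : F.Nonempty) (hC : C.Nonempty)
    (h : ∃ k, IsWallThrough F α k C D) : ¬∃ l, IsWallThrough F (-α) l C D := by
  rintro ⟨l, hFl, hCl, -⟩
  obtain ⟨k, hFk, hCk, -⟩ := h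
  obtain ⟨x, hx⟩ := hF
  obtain ⟨c, hc⟩ := hC
  have := hFk x hx
  have := hCk c hc
  have := hFl x hx
  have := hCl c hc
  simp only [LinearMap.neg_apply] at *
  linarith

end Walls

section WallFloors

variable {U : Type*} [NormedAddCommGroup U] [NormedSpace ℝ U] [FiniteDimensional ℝ U]
  {R : Set (U →ₗ[ℝ] ℝ)} {F C D : Set U} {α : U →ₗ[ℝ] ℝ} {c d : U}

lemma floor_eq_floor_add_one_of_isWallThrough (hC : IsAlcove R C) (hD : IsAlcove R D)
    (hα : α ∈ R) (hF : F.Nonempty) (hFC : F ⊆ closure C) (hFD : F ⊆ closure D) {k : ℤ}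
    (hW : IsWallThrough F α k C D) (hc : c ∈ C) (hd : d ∈ D) : ⌊α c⌋ = ⌊α d⌋ + 1 := by
  obtain ⟨x, hx⟩ := hF
  have hCk := (hC.forall_intCast_lt_iff hα hc k).1 hW.2.1
  have hDk := (hD.forall_lt_intCast_iff hα hd k).1 hW.2.2
  have hC' := hC.floor_mem_Icc_of_mem_closure hα hc (hFC hx) (hW.1 x hx)
  have hD' := hD.floor_mem_Icc_of_mem_closure hα hd (hFD hx) (hW.1 x hx)
  simp only [Set.mem_Icc] at hC' hD'
  omega

lemma floor_eq_floor_of_not_isWallThrough (hC : IsAlcove R C) (hD : IsAlcove R D)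
    (hα : α ∈ R) (hF : IsFacette R F) (hFC : F ⊆ closure C) (hFD : F ⊆ closure D)
    (hpos : ¬∃ k, IsWallThrough F α k C D) (hneg : ¬∃ k, IsWallThrough F (-α) k C D)
    (hc : c ∈ C) (hd : d ∈ D) : ⌊α c⌋ = ⌊α d⌋ := by
  obtain ⟨x, hx⟩ := hF.nonempty
  by_cases hxZ : ∃ k : ℤ, α x = k
  · obtain ⟨k, hk⟩ := hxZ
    have hFk : ∀ y ∈ F, α y = k := fun y hy => hF.apply_eq_of_apply_eq hα hx hy hk
    have hC' := hC.floor_mem_Icc_of_mem_closure hα hc (hFC hx) hk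
    have hD' := hD.floor_mem_Icc_of_mem_closure hα hd (hFD hx) hk
    have hCD : ¬(k ≤ ⌊α c⌋ ∧ ⌊α d⌋ < k) := fun h => hpos
      ⟨k, hFk, (hC.forall_intCast_lt_iff hα hc k).2 h.1, (hD.forall_lt_intCast_iff hα hd k).2 h.2⟩
    have hDC : ¬(k ≤ ⌊α d⌋ ∧ ⌊α c⌋ < k) := fun h => hneg ⟨-k, isWallThrough_neg_neg.2
      ⟨hFk, (hD.forall_intCast_lt_iff hα hd k).2 h.1, (hC.forall_lt_intCast_iff hα hc k).2 h.2⟩⟩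
    simp only [Set.mem_Icc] at hC' hD'
    omega
  · push Not at hxZ
    rw [hC.floor_eq_of_mem_closure hα hc (hFC hx) hxZ,
      hD.floor_eq_of_mem_closure hα hd (hFD hx) hxZ]

end WallFloors

lemma sum_abs_floor_add_sub_floor {U : Type*} [AddCommGroup U] [Module ℝ U]
    {S : Finset (U →ₗ[ℝ] ℝ)} {lam y c : U} {j : ℤ} (hlam : ∀ α ∈ S, ∃ m : ℤ, α lam = m)
    (h : ∀ α ∈ S, ⌊α c⌋ = ⌊α y⌋ + j) :
    ∑ α ∈ S, ((|⌊α (lam + y)⌋ - ⌊α c⌋| : ℤ) : ℝ) = ∑ α ∈ S, |α lam - j| := by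
  refine Finset.sum_congr rfl fun α hα => ?_
  obtain ⟨m, hm⟩ := hlam α hα
  rw [map_add, hm, Int.floor_intCast_add, h α hα]
  push_cast
  congr 1
  ring

theorem card_separating_hyperplanes_translation_theta_general
    {U : Type*} [NormedAddCommGroup U] [NormedSpace ℝ U] [FiniteDimensional ℝ U]
    (R : Finset (U →ₗ[ℝ] ℝ))
    (hR0 : (0 : U →ₗ[ℝ] ℝ) ∉ R)
    (hRneg : ∀ α ∈ R, -α ∈ R)
    (hreduced : ∀ α ∈ R, ∀ β ∈ R, ∀ c : ℝ, β = c • α → β = α ∨ β = -α)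
    (θ : U ≃ᵃ[ℝ] U)
    (hθH : (fun H : Set U => (θ : U → U) '' H) '' rootHyperplanes (R : Set (U →ₗ[ℝ] ℝ))
      = rootHyperplanes (R : Set (U →ₗ[ℝ] ℝ)))
    (F : Set U) (hF : IsFacette (R : Set (U →ₗ[ℝ] ℝ)) F) (hθF : (θ : U → U) '' F = F)
    (lam : U) (hlam : ∀ α ∈ R, ∃ m : ℤ, α lam = (m : ℝ))
    (C : Set U) (hC : IsAlcove (R : Set (U →ₗ[ℝ] ℝ)) C) (hFC : F ⊆ closure C)
    -- the set R_{F,θ} of roots α ∈ R_F with α - k_α > 0 on 𝒞 and α∘θ - k_α < 0 on 𝒞 :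
    (RFθ : Set (U →ₗ[ℝ] ℝ))
    (hRFθ : RFθ = {α : U →ₗ[ℝ] ℝ | α ∈ R ∧ ∃ k : ℤ, (∀ x ∈ F, α x = (k : ℝ)) ∧
      (∀ x ∈ C, (k : ℝ) < α x) ∧ (∀ x ∈ C, α (θ x) < (k : ℝ))})
    (B : Finset (U →ₗ[ℝ] ℝ)) (hB : (B : Set (U →ₗ[ℝ] ℝ)) = RFθ)
    -- A is a set of representatives of the pairs {α, -α} avoiding R_{F,θ} :
    (A : Finset (U →ₗ[ℝ] ℝ)) (hAR : (A : Set (U →ₗ[ℝ] ℝ)) ⊆ (R : Set (U →ₗ[ℝ] ℝ)))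
    (hAavoid : ∀ α ∈ A, α ∉ RFθ ∧ -α ∉ RFθ)
    (hArep : ∀ α ∈ R, α ∉ RFθ → -α ∉ RFθ →
      ((α ∈ A ∨ -α ∈ A) ∧ ¬(α ∈ A ∧ -α ∈ A))) :
    IsAlcove (R : Set (U →ₗ[ℝ] ℝ)) ((fun x => lam + x) '' ((θ : U → U) '' C)) ∧
    ({H : Set U | H ∈ rootHyperplanes (R : Set (U →ₗ[ℝ] ℝ)) ∧
        SeparatesIn (R : Set (U →ₗ[ℝ] ℝ)) H C
          ((fun x => lam + x) '' ((θ : U → U) '' C))}.ncard : ℝ)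
      = (∑ α ∈ A, |α lam|) + ∑ α ∈ B, |α lam - 1| := by
  classical
  subst hB
  let e : U ≃ₜ U := (AffineEquiv.toContinuousAffineEquiv θ).toHomeomorph
  have hD : IsAlcove (R : Set _) (θ '' C) := hC.image_homeomorph e hθH
  have hE : IsAlcove (R : Set _) ((fun x => lam + x) '' (θ '' C)) :=
    hD.image_homeomorph (Homeomorph.addLeft lam) (image_add_left_rootHyperplanes hlam)
  refine ⟨hE, ?_⟩
  have hFD : F ⊆ closure (θ '' C) := hθF ▸ (Set.image_mono hFC).trans
    (image_closure_subset_closure_image e.continuous)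
  have hBwall : ∀ α, α ∈ B ↔ α ∈ R ∧ ∃ k, IsWallThrough F α k C (θ '' C) := fun α => by
    rw [← Finset.mem_coe, hRFθ]
    simp [IsWallThrough]
  obtain ⟨c, hc⟩ := hC.nonempty
  have hS : IsRootPairTransversal R (A ∪ B) := isRootPairTransversal_union
    (fun α hα => ((hBwall α).1 hα).1)
    (fun α hα hneg => not_exists_isWallThrough_neg hF.nonempty hC.nonempty
      ((hBwall α).1 hα).2 ((hBwall _).1 hneg).2)
    (Finset.coe_subset.1 hAR) hAavoid hArep
  have hAfloor : ∀ α ∈ A, ⌊α c⌋ = ⌊α (θ c)⌋ + 0 := fun α hα => by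
    have hαR := hAR hα
    rw [add_zero]
    exact floor_eq_floor_of_not_isWallThrough hC hD hαR hF hFC hFD
      (fun h => (hAavoid α hα).1 ((hBwall α).2 ⟨hαR, h⟩))
      (fun h => (hAavoid α hα).2 ((hBwall _).2 ⟨hRneg α hαR, h⟩)) hc (Set.mem_image_of_mem θ hc)
  have hBfloor : ∀ α ∈ B, ⌊α c⌋ = ⌊α (θ c)⌋ + 1 := fun α hα => by
    obtain ⟨hαR, k, hW⟩ := (hBwall α).1 hα
    exact floor_eq_floor_add_one_of_isWallThrough hC hD hαR hF.nonempty hFC hFD hW hc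
      (Set.mem_image_of_mem θ hc)
  rw [← Int.cast_natCast, hS.ncard_setOf_separatesIn hR0 hreduced hC hE hc
    ⟨θ c, ⟨c, hc, rfl⟩, rfl⟩, Int.cast_sum,
    Finset.sum_union (Finset.disjoint_left.2 fun α hαA hαB => (hAavoid α hαA).1 hαB),
    sum_abs_floor_add_sub_floor (fun α hα => hlam α (hAR hα)) hAfloor,
    sum_abs_floor_add_sub_floor (fun α hα => hlam α ((hBwall α).1 hα).1) hBfloor]
  simp only [Int.cast_zero, sub_zero, Int.cast_one]

/-- The generalized Iwahori–Matsumoto length formula (Proposition 4.3 of the paper):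
the number of hyperplanes separating the alcove `𝒞` from `t_λ(θ(𝒞))`. -/
theorem card_separating_hyperplanes_translation_theta
    {U : Type*} [NormedAddCommGroup U] [NormedSpace ℝ U] [FiniteDimensional ℝ U]
    (R : Finset (U →ₗ[ℝ] ℝ))
    (hR0 : (0 : U →ₗ[ℝ] ℝ) ∉ R)
    (hRneg : ∀ α ∈ R, -α ∈ R)
    (hcoroot : ∀ α ∈ R, ∃ αv : U, α αv = 2 ∧
      ∀ β ∈ R, (β - (β αv) • α) ∈ R ∧ ∃ m : ℤ, β αv = (m : ℝ))
    (hreduced : ∀ α ∈ R, ∀ β ∈ R, ∀ c : ℝ, β = c • α → β = α ∨ β = -α)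
    (θ : U ≃ᵃ[ℝ] U)
    (hθH : (fun H : Set U => (θ : U → U) '' H) '' rootHyperplanes (R : Set (U →ₗ[ℝ] ℝ))
      = rootHyperplanes (R : Set (U →ₗ[ℝ] ℝ)))
    (F : Set U) (hF : IsFacette (R : Set (U →ₗ[ℝ] ℝ)) F) (hθF : (θ : U → U) '' F = F)
    (lam : U) (hlam : ∀ α ∈ R, ∃ m : ℤ, α lam = (m : ℝ))
    (C : Set U) (hC : IsAlcove (R : Set (U →ₗ[ℝ] ℝ)) C) (hFC : F ⊆ closure C)
    -- the set R_{F,θ} of roots α ∈ R_F with α - k_α > 0 on 𝒞 and α∘θ - k_α < 0 on 𝒞 :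
    (RFθ : Set (U →ₗ[ℝ] ℝ))
    (hRFθ : RFθ = {α : U →ₗ[ℝ] ℝ | α ∈ R ∧ ∃ k : ℤ, (∀ x ∈ F, α x = (k : ℝ)) ∧
      (∀ x ∈ C, (k : ℝ) < α x) ∧ (∀ x ∈ C, α (θ x) < (k : ℝ))})
    (B : Finset (U →ₗ[ℝ] ℝ)) (hB : (B : Set (U →ₗ[ℝ] ℝ)) = RFθ)
    -- A is a set of representatives of the pairs {α, -α} avoiding R_{F,θ} :
    (A : Finset (U →ₗ[ℝ] ℝ)) (hAR : (A : Set (U →ₗ[ℝ] ℝ)) ⊆ (R : Set (U →ₗ[ℝ] ℝ)))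
    (hAavoid : ∀ α ∈ A, α ∉ RFθ ∧ -α ∉ RFθ)
    (hArep : ∀ α ∈ R, α ∉ RFθ → -α ∉ RFθ →
      ((α ∈ A ∨ -α ∈ A) ∧ ¬(α ∈ A ∧ -α ∈ A))) :
    IsAlcove (R : Set (U →ₗ[ℝ] ℝ)) ((fun x => lam + x) '' ((θ : U → U) '' C)) ∧
    ({H : Set U | H ∈ rootHyperplanes (R : Set (U →ₗ[ℝ] ℝ)) ∧
        SeparatesIn (R : Set (U →ₗ[ℝ] ℝ)) H C
          ((fun x => lam + x) '' ((θ : U → U) '' C))}.ncard : ℝ)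
      = (∑ α ∈ A, |α lam|) + ∑ α ∈ B, |α lam - 1| :=
  card_separating_hyperplanes_translation_theta_general R hR0 hRneg hreduced θ hθH F hF hθF lam hlam
    C hC hFC RFθ hRFθ B hB A hAR hAavoid hArep
end

section
/- In the Witt-vector setting below, let (D_i)_{i∈ℤ} be a grading of D = Lⁿ (finitely many nonzero subspaces with D = ⊕_i D_i), F^i = Σ_{j≥i} D_j, δ : D → D the linear automorphism acting as multiplication by p^i on D_i, and for b ∈ GL_n(L) let φ = (v ↦ b·v) ∘ σ_D. If M is an O-lattice in D that is graded (M = Σ_i (M ∩ D_i)) and strongly divisible (M = Σ_{i∈ℤ} p^{-i}·φ(F^i ∩ M)), then M = φ(δ⁻¹(M)), i.e. M = b · σ_D(δ⁻¹(M)). -/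
/-! Strong divisibility and the grading together give `M = Σ_i p^{-i}·φ(M ∩ D_i)`: by modularity
of the submodule lattice and independence of the `D_j`, a vector of `F^i ∩ M` is a sum of its
graded pieces `x_j ∈ M ∩ D_j` with `j ≥ i`, and `p^{-i}·φ(x_j) = p^{j-i}·(p^{-j}·φ(x_j))` with
`p^{j-i} ∈ O`. As `δ⁻¹` is multiplication by `p^{-i}` on `D_i` and `σ` fixes `p`, that sum is
`φ(δ⁻¹(M))`. -/

theorem inf_biSup_eq_biSup_inf {α ι : Type*} [CompleteLattice α] [IsModularLattice α]
    [IsCompactlyGenerated α] {E : ι → α} (hE : iSupIndep E) {M : α}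
    (hM : M = ⨆ i, M ⊓ E i) (s : Set ι) :
    M ⊓ ⨆ i ∈ s, E i = ⨆ i ∈ s, M ⊓ E i := by
  refine le_antisymm ?_ (iSup₂_le fun i hi => inf_le_inf_left M (le_biSup E hi))
  have hout : Disjoint (⨆ (i) (_ : i ∉ s), M ⊓ E i) (⨆ i ∈ s, E i) :=
    (hE.disjoint_biSup_biSup disjoint_compl_left).mono_left
      (iSup₂_mono fun _ _ => inf_le_right)
  have hin : (⨆ i ∈ s, M ⊓ E i) ≤ ⨆ i ∈ s, E i := iSup₂_mono fun _ _ => inf_le_right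
  conv_lhs => rw [hM, iSup_split _ (· ∈ s), sup_inf_assoc_of_le _ hin]
  rw [disjoint_iff.1 hout, sup_bot_eq]

theorem iSupIndep.restrictScalars {R S M ι : Type*} [Semiring R] [Semiring S] [AddCommMonoid M]
    [Module R M] [Module S M] [SMul S R] [IsScalarTower S R M] {D : ι → Submodule R M}
    (hD : iSupIndep D) : iSupIndep fun i => (D i).restrictScalars S := fun i => by
  simpa only [← Submodule.restrictScalars_iSup, Submodule.disjoint_restrictScalars_iff] using hD i

theorem LinearEquiv.symm_apply_eq_inv_smul {K V : Type*} [Field K] [AddCommGroup V] [Module K V]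
    (δ : V ≃ₗ[K] V) {a : K} {v : V} (h : δ v = a • v) : δ.symm v = a⁻¹ • v := by
  rcases eq_or_ne a 0 with rfl | ha
  · rw [zero_smul, δ.map_eq_zero_iff] at h
    simp [h]
  · rw [δ.symm_apply_eq, map_smul, h, inv_smul_smul₀ ha]

section Semilinear

variable {R L V W : Type*} [CommRing R] [Field L] [Algebra R L]
  [AddCommGroup V] [Module L V] [Module R V] [IsScalarTower R L V]
  [AddCommGroup W] [Module L W] [Module R W] [IsScalarTower R L W]
  {σ : L →+* L} {τ : R →+* R}

def LinearMap.restrictScalarsₛₗ (hστ : ∀ r, σ (algebraMap R L r) = algebraMap R L (τ r))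
    (f : V →ₛₗ[σ] W) : V →ₛₗ[τ] W where
  toFun := f
  map_add' := f.map_add
  map_smul' r v := by
    rw [← algebraMap_smul L r v, f.map_smulₛₗ, hστ, algebraMap_smul]

@[simp]
theorem LinearMap.restrictScalarsₛₗ_apply (hστ : ∀ r, σ (algebraMap R L r) = algebraMap R L (τ r))
    (f : V →ₛₗ[σ] W) (v : V) : f.restrictScalarsₛₗ hστ v = f v := rfl

end Semilinear

def Matrix.twistedMulVec {ι K : Type*} [Fintype ι] [CommSemiring K] (σ : K →+* K)
    (b : Matrix ι ι K) : (ι → K) →ₛₗ[σ] (ι → K) where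
  toFun v := b.mulVec fun j => σ (v j)
  map_add' x y := by simp only [Pi.add_apply, map_add, ← Matrix.mulVec_add]; rfl
  map_smul' c v := by simp only [Pi.smul_apply, smul_eq_mul, map_mul, ← Matrix.mulVec_smul]; rfl

section StronglyDivisible

variable {R L V : Type*} [CommRing R] [Field L] [Algebra R L]
  [AddCommGroup V] [Module L V] [Module R V] [IsScalarTower R L V]
  {τ : R →+* R} [RingHomSurjective τ] {p : ℕ}

theorem map_zpow_neg_smul_le {i j : ℤ} (hij : i ≤ j) (hp : (p : L) ≠ 0) (φ : V →ₛₗ[τ] V)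
    (N : Submodule R V) :
    N.map ((p : L) ^ (-i) • φ) ≤ N.map ((p : L) ^ (-j) • φ) := by
  rintro _ ⟨v, hv, rfl⟩
  have hφv : ((p : L) ^ (-i) • φ) v = ((p : R) ^ (j - i).toNat) • ((p : L) ^ (-j) • φ) v := by
    rw [LinearMap.smul_apply, LinearMap.smul_apply, ← algebraMap_smul L ((p : R) ^ (j - i).toNat),
      smul_smul, map_pow, map_natCast, ← zpow_natCast, Int.toNat_of_nonneg (sub_nonneg.2 hij),
      ← zpow_add₀ hp]
    ring_nf
  rw [hφv]
  exact Submodule.smul_mem _ _ ⟨v, hv, rfl⟩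

theorem eq_iSup_map_inf_of_stronglyDivisible (hp : (p : L) ≠ 0) (φ : V →ₛₗ[τ] V)
    {E : ℤ → Submodule R V} (hE : iSupIndep E) {M : Submodule R V} (hMgr : M = ⨆ i, M ⊓ E i)
    (hMsd : M = ⨆ i, (M ⊓ ⨆ j ∈ {j | i ≤ j}, E j).map ((p : L) ^ (-i) • φ)) :
    M = ⨆ i, (M ⊓ E i).map ((p : L) ^ (-i) • φ) := by
  refine le_antisymm ?_ (iSup_le fun i => ?_)
  · conv_lhs => rw [hMsd]
    refine iSup_le fun i => ?_
    simp only [inf_biSup_eq_biSup_inf hE hMgr, Submodule.map_iSup]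
    exact iSup₂_le fun j hij => (map_zpow_neg_smul_le hij hp φ _).trans (le_iSup_of_le j le_rfl)
  · conv_rhs => rw [hMsd]
    exact le_iSup_of_le i <|
      Submodule.map_mono (inf_le_inf_left M (le_biSup E (show i ≤ i from le_rfl)))

end StronglyDivisible

section Frobenius

variable {R L V : Type*} [CommRing R] [Field L] [Algebra R L]
  [AddCommGroup V] [Module L V] [Module R V] [IsScalarTower R L V]
  {σ : L →+* L} {τ : R →+* R} [RingHomSurjective τ]
  (hστ : ∀ r, σ (algebraMap R L r) = algebraMap R L (τ r)) (φ : V →ₛₗ[σ] V) {p : ℕ}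

theorem map_restrictScalarsₛₗ_map_symm_eq_of_stronglyDivisible (hp : (p : L) ≠ 0)
    {D : ℤ → Submodule L V} (hD : iSupIndep D) (δ : V ≃ₗ[L] V)
    (hδ : ∀ i, ∀ v ∈ D i, δ v = (p : L) ^ i • v) {M : Submodule R V}
    (hMgr : M = ⨆ i, M ⊓ (D i).restrictScalars R)
    (hMsd : M = ⨆ i, (M ⊓ (⨆ j ∈ {j | i ≤ j}, D j).restrictScalars R).map
      ((p : L) ^ (-i) • φ.restrictScalarsₛₗ hστ)) :
    (M.map (δ.symm.toLinearMap.restrictScalars R)).map (φ.restrictScalarsₛₗ hστ) = M := by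
  set φR := φ.restrictScalarsₛₗ hστ
  simp only [Submodule.restrictScalars_iSup] at hMsd
  have piece : ∀ i,
      ((M ⊓ (D i).restrictScalars R).map (δ.symm.toLinearMap.restrictScalars R)).map φR
        = (M ⊓ (D i).restrictScalars R).map ((p : L) ^ (-i) • φR) := fun i => by
    refine SetLike.coe_injective ?_
    rw [← Submodule.map_comp, Submodule.map_coe, Submodule.map_coe]
    refine Set.image_congr fun v hv => ?_
    have hδv : δ.symm v = (p : L) ^ (-i) • v := by
      rw [δ.symm_apply_eq_inv_smul (hδ i v hv.2), zpow_neg]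
    simp only [LinearMap.comp_apply, LinearMap.restrictScalars_apply, LinearEquiv.coe_coe, hδv,
      LinearMap.smul_apply, φR, LinearMap.restrictScalarsₛₗ_apply, φ.map_smulₛₗ, map_zpow₀,
      map_natCast]
  calc (M.map (δ.symm.toLinearMap.restrictScalars R)).map φR
      = ⨆ i,
          ((M ⊓ (D i).restrictScalars R).map (δ.symm.toLinearMap.restrictScalars R)).map φR := by
        conv_lhs => rw [hMgr]
        simp only [Submodule.map_iSup]
    _ = ⨆ i, (M ⊓ (D i).restrictScalars R).map ((p : L) ^ (-i) • φR) := iSup_congr piece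
    _ = M := (eq_iSup_map_inf_of_stronglyDivisible hp φR hD.restrictScalars hMgr hMsd).symm

end Frobenius

theorem strongly_divisible_lattice_eq_phi_delta_inv_general
    (p : ℕ) [Fact p.Prime] (k : Type*) [Field k] [IsAlgClosed k] [CharP k p]
    (L : Type*) [Field L] [Algebra (WittVector p k) L] [IsFractionRing (WittVector p k) L]
    -- σ : the automorphism of L induced by the Witt vector Frobenius :
    (σ : L ≃+* L)
    (hσ : ∀ x : WittVector p k,
      σ (algebraMap (WittVector p k) L x)
        = algebraMap (WittVector p k) L (WittVector.frobeniusEquiv p k x))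
    (n : ℕ)
    -- a grading of D = Lⁿ with finitely many nonzero pieces :
    (D : ℤ → Submodule L (Fin n → L))
    (hD : DirectSum.IsInternal D)
    -- δ acts as multiplication by p^i on D_i :
    (δ : (Fin n → L) ≃ₗ[L] (Fin n → L))
    (hδ : ∀ i : ℤ, ∀ v ∈ D i, δ v = ((p : L) ^ i) • v)
    (b : Matrix.GeneralLinearGroup (Fin n) L)
    -- M an O-lattice in D :
    (M : Submodule (WittVector p k) (Fin n → L))
    -- M is graded : M = Σ_i (M ∩ D_i) :
    (hMgr : M = ⨆ i : ℤ, (M ⊓ (D i).restrictScalars (WittVector p k)))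
    -- M is strongly divisible : M = Σ_i p^{-i}·φ(F^i ∩ M), with φ v = b·σ_D(v) :
    (hMsd : M = ⨆ i : ℤ, Submodule.span (WittVector p k)
      ((fun v : Fin n → L => ((p : L) ^ (-i)) •
          (b : Matrix (Fin n) (Fin n) L).mulVec (fun j => σ (v j))) ''
        ((((⨆ j ∈ {j : ℤ | i ≤ j}, D j : Submodule L (Fin n → L))) : Set (Fin n → L))
          ∩ (M : Set (Fin n → L))))) :
    (M : Set (Fin n → L)) =
      (fun v : Fin n → L =>
        (b : Matrix (Fin n) (Fin n) L).mulVec (fun j => σ (v j))) ''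
        (δ.symm '' (M : Set (Fin n → L))) := by
  have hp : (p : L) ≠ 0 := by
    simpa using (IsFractionRing.injective (WittVector p k) L).ne (WittVector.p_nonzero p k)
  let φ := (Matrix.twistedMulVec (σ : L →+* L) (b : Matrix (Fin n) (Fin n) L)).restrictScalarsₛₗ
    (τ := (WittVector.frobeniusEquiv p k : WittVector p k →+* WittVector p k)) hσ
  have hMsd' : M = ⨆ i : ℤ, (M ⊓ (⨆ j ∈ {j : ℤ | i ≤ j}, D j).restrictScalars (WittVector p k)).map
      ((p : L) ^ (-i) • φ) := by
    conv_lhs => rw [hMsd]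
    refine iSup_congr fun i => ?_
    rw [← Submodule.span_eq (Submodule.map _ _), Submodule.map_coe, Submodule.coe_inf,
      Set.inter_comm]
    rfl
  have hM := map_restrictScalarsₛₗ_map_symm_eq_of_stronglyDivisible hσ _ hp
    hD.submodule_iSupIndep δ hδ hMgr hMsd'
  conv_lhs => rw [← hM]
  rw [Submodule.map_coe, Submodule.map_coe]
  rfl

/-- Lemma 2.8 (lemme fd) of the paper, for the standard representation of GL_n:
a strongly divisible lattice compatible with the grading satisfies
`M = b · σ_D(δ⁻¹(M))`, i.e. `M = ρ(c) σ(M)` with `c = b·σ(μ(p⁻¹))`. -/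
theorem strongly_divisible_lattice_eq_phi_delta_inv
    (p : ℕ) [Fact p.Prime] (k : Type*) [Field k] [IsAlgClosed k] [CharP k p]
    (L : Type*) [Field L] [Algebra (WittVector p k) L] [IsFractionRing (WittVector p k) L]
    -- σ : the automorphism of L induced by the Witt vector Frobenius :
    (σ : L ≃+* L)
    (hσ : ∀ x : WittVector p k,
      σ (algebraMap (WittVector p k) L x)
        = algebraMap (WittVector p k) L (WittVector.frobeniusEquiv p k x))
    (n : ℕ)
    -- a grading of D = Lⁿ with finitely many nonzero pieces :
    (D : ℤ → Submodule L (Fin n → L))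
    (hDfin : {i : ℤ | D i ≠ ⊥}.Finite)
    (hD : DirectSum.IsInternal D)
    -- δ acts as multiplication by p^i on D_i :
    (δ : (Fin n → L) ≃ₗ[L] (Fin n → L))
    (hδ : ∀ i : ℤ, ∀ v ∈ D i, δ v = ((p : L) ^ i) • v)
    (b : Matrix.GeneralLinearGroup (Fin n) L)
    -- M an O-lattice in D :
    (M : Submodule (WittVector p k) (Fin n → L))
    (hMfg : M.FG)
    (hMspan : Submodule.span L (M : Set (Fin n → L)) = ⊤)
    -- M is graded : M = Σ_i (M ∩ D_i) :
    (hMgr : M = ⨆ i : ℤ, (M ⊓ (D i).restrictScalars (WittVector p k)))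
    -- M is strongly divisible : M = Σ_i p^{-i}·φ(F^i ∩ M), with φ v = b·σ_D(v) :
    (hMsd : M = ⨆ i : ℤ, Submodule.span (WittVector p k)
      ((fun v : Fin n → L => ((p : L) ^ (-i)) •
          (b : Matrix (Fin n) (Fin n) L).mulVec (fun j => σ (v j))) ''
        ((((⨆ j ∈ {j : ℤ | i ≤ j}, D j : Submodule L (Fin n → L))) : Set (Fin n → L))
          ∩ (M : Set (Fin n → L))))) :
    (M : Set (Fin n → L)) =
      (fun v : Fin n → L =>
        (b : Matrix (Fin n) (Fin n) L).mulVec (fun j => σ (v j))) ''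
        (δ.symm '' (M : Set (Fin n → L))) :=
  strongly_divisible_lattice_eq_phi_delta_inv_general p k L σ hσ n D hD δ hδ b M hMgr hMsd
end

section
/- In the Witt-vector setting below, let (D_i)_{i∈ℤ} be a grading of D = Lⁿ (finitely many nonzero subspaces with D = ⊕_i D_i), F^i = Σ_{j≥i} D_j, δ : D → D the linear automorphism acting as multiplication by p^i on D_i, and let φ = σ_D ∘ δ. Let M be an O-lattice in D that is graded, i.e. M = Σ_i (M ∩ D_i). Then M is strongly divisible, i.e. M = Σ_{i∈ℤ} p^{-i}·φ(F^i ∩ M), if and only if σ_D(M) = M. -/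
theorem aux_disjoint_biSup_biSup {ι R E : Type*} [Ring R] [AddCommGroup E] [Module R E]
    {D : ι → Submodule R E} (hD : iSupIndep D) {A B : Set ι} (hAB : Disjoint A B) :
    Disjoint (⨆ j ∈ A, D j) (⨆ j ∈ B, D j) := by
  classical
  rw [Submodule.disjoint_def]
  intro x hxA hxB
  rw [Submodule.mem_biSup_iff_exists_dfinsupp] at hxA hxB
  obtain ⟨f, hf⟩ := hxA
  obtain ⟨g, hg⟩ := hxB
  have hfg : DFinsupp.filter (· ∈ A) f = DFinsupp.filter (· ∈ B) g :=
    hD.dfinsupp_lsum_injective (hf.trans hg.symm)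
  have hzero : DFinsupp.filter (· ∈ A) f = 0 := by
    ext j
    by_cases hj : j ∈ A
    · have h2 : j ∉ B := fun hb => (Set.disjoint_left.mp hAB hj) hb
      have h3 := DFunLike.congr_fun hfg j
      simp only [DFinsupp.filter_apply, if_pos hj, if_neg h2] at h3
      simp [DFinsupp.filter_apply, hj, h3]
    · simp [DFinsupp.filter_apply, hj]
  rw [hzero, map_zero] at hf
  exact hf.symm

noncomputable def auxτ (p : ℕ) [Fact p.Prime] (k : Type*) [Field k] [IsAlgClosed k] [CharP k p] :
    WittVector p k →+* WittVector p k :=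
  (WittVector.frobeniusEquiv p k : WittVector p k ≃+* WittVector p k)

instance auxτsurj (p : ℕ) [Fact p.Prime] (k : Type*) [Field k] [IsAlgClosed k] [CharP k p] :
    RingHomSurjective (auxτ p k) :=
  ⟨(WittVector.frobeniusEquiv p k).surjective⟩

/-- σ_D as a `τ`-semilinear map. -/
noncomputable def auxSigmaD (p : ℕ) [Fact p.Prime] (k : Type*) [Field k] [IsAlgClosed k]
    [CharP k p] (L : Type*) [Field L] [Algebra (WittVector p k) L]
    (σ : L ≃+* L)
    (hσ : ∀ x : WittVector p k,
      σ (algebraMap (WittVector p k) L x)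
        = algebraMap (WittVector p k) L (WittVector.frobeniusEquiv p k x))
    (n : ℕ) : (Fin n → L) →ₛₗ[auxτ p k] (Fin n → L) where
  toFun v := fun j => σ (v j)
  map_add' u v := by funext j; simp
  map_smul' c v := by
    funext j
    show σ ((c • v) j) = ((auxτ p k c) • fun j => σ (v j)) j
    show σ (c • v j) = (auxτ p k c) • σ (v j)
    rw [Algebra.smul_def, Algebra.smul_def, map_mul, hσ]
    rfl

/-- `p^{-i} ∘ σ_D ∘ δ` as a `τ`-semilinear map. -/
noncomputable def auxG (p : ℕ) [Fact p.Prime] (k : Type*) [Field k] [IsAlgClosed k]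
    [CharP k p] (L : Type*) [Field L] [Algebra (WittVector p k) L]
    (σ : L ≃+* L)
    (hσ : ∀ x : WittVector p k,
      σ (algebraMap (WittVector p k) L x)
        = algebraMap (WittVector p k) L (WittVector.frobeniusEquiv p k x))
    (n : ℕ) (δ : (Fin n → L) ≃ₗ[L] (Fin n → L)) (i : ℤ) :
    (Fin n → L) →ₛₗ[auxτ p k] (Fin n → L) where
  toFun v := ((p : L) ^ (-i)) • (fun j => σ (δ v j))
  map_add' u v := by
    funext j
    show (p : L) ^ (-i) • σ ((δ (u + v)) j) =
      (p : L) ^ (-i) • σ ((δ u) j) + (p : L) ^ (-i) • σ ((δ v) j)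
    rw [map_add δ]
    show (p : L) ^ (-i) • σ ((δ u) j + (δ v) j) = _
    rw [map_add, smul_add]
  map_smul' c v := by
    funext j
    have h1 : c • v = (algebraMap (WittVector p k) L c) • v := (algebraMap_smul _ _ _).symm
    show (p : L) ^ (-i) • σ ((δ (c • v)) j) =
      (auxτ p k c) • ((p : L) ^ (-i) • σ ((δ v) j))
    rw [h1, map_smul δ]
    show (p : L) ^ (-i) • σ ((algebraMap (WittVector p k) L c) * (δ v) j) = _
    rw [map_mul, hσ]
    show (p : L) ^ (-i) * (_ * σ ((δ v) j)) = (auxτ p k c) • ((p : L) ^ (-i) * σ ((δ v) j))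
    rw [Algebra.smul_def]
    show _ = algebraMap (WittVector p k) L (WittVector.frobeniusEquiv p k c) * _
    ring

/-- Corollary 2.12 of the paper, for the standard representation of GL_n:
a graded O-lattice `M` is strongly divisible for the Frobenius `φ = σ_D ∘ δ`
attached to a super-admissible pair if and only if `σ_D(M) = M`. -/
theorem graded_lattice_strongly_divisible_iff_sigma_stable
    (p : ℕ) [Fact p.Prime] (k : Type*) [Field k] [IsAlgClosed k] [CharP k p]
    (L : Type*) [Field L] [Algebra (WittVector p k) L] [IsFractionRing (WittVector p k) L]
    -- σ : the automorphism of L induced by the Witt vector Frobenius :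
    (σ : L ≃+* L)
    (hσ : ∀ x : WittVector p k,
      σ (algebraMap (WittVector p k) L x)
        = algebraMap (WittVector p k) L (WittVector.frobeniusEquiv p k x))
    (n : ℕ)
    -- a grading of D = Lⁿ with finitely many nonzero pieces :
    (D : ℤ → Submodule L (Fin n → L))
    (hDfin : {i : ℤ | D i ≠ ⊥}.Finite)
    (hD : DirectSum.IsInternal D)
    -- δ acts as multiplication by p^i on D_i :
    (δ : (Fin n → L) ≃ₗ[L] (Fin n → L))
    (hδ : ∀ i : ℤ, ∀ v ∈ D i, δ v = ((p : L) ^ i) • v)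
    -- M an O-lattice in D :
    (M : Submodule (WittVector p k) (Fin n → L))
    (hMfg : M.FG)
    (hMspan : Submodule.span L (M : Set (Fin n → L)) = ⊤)
    -- M is graded : M = Σ_i (M ∩ D_i) :
    (hMgr : M = ⨆ i : ℤ, (M ⊓ (D i).restrictScalars (WittVector p k))) :
    -- M is strongly divisible (with φ = σ_D ∘ δ) iff σ_D(M) = M :
    (M = ⨆ i : ℤ, Submodule.span (WittVector p k)
        ((fun v : Fin n → L => ((p : L) ^ (-i)) • (fun j => σ (δ v j))) ''
          ((((⨆ j ∈ {j : ℤ | i ≤ j}, D j : Submodule L (Fin n → L))) : Set (Fin n → L))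
            ∩ (M : Set (Fin n → L)))))
      ↔ (fun v : Fin n → L => fun j => σ (v j)) '' (M : Set (Fin n → L))
          = (M : Set (Fin n → L)) := by
  classical
  set O := WittVector p k
  let f' : (Fin n → L) →ₛₗ[auxτ p k] (Fin n → L) := auxSigmaD p k L σ hσ n
  let g' : ℤ → ((Fin n → L) →ₛₗ[auxτ p k] (Fin n → L)) := fun i => auxG p k L σ hσ n δ i
  let F : ℤ → Submodule L (Fin n → L) := fun i => ⨆ j ∈ {j : ℤ | i ≤ j}, D j
  let N : ℤ → Submodule O (Fin n → L) := fun j => M ⊓ (D j).restrictScalars O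
  have hp0 : (p : L) ≠ 0 := by
    have h1 : (p : O) ≠ 0 := WittVector.p_nonzero p k
    intro h
    apply h1
    apply IsFractionRing.injective O L
    rw [map_natCast, h, map_zero]
  have hσp : σ (p : L) = (p : L) := by
    have h1 : ((p : L)) = algebraMap O L (p : O) := (map_natCast _ p).symm
    rw [h1, hσ, map_natCast, map_natCast]
  -- pointwise formula for `g' i` on `D j`
  have hg : ∀ (i j : ℤ) (v : Fin n → L), v ∈ D j →
      g' i v = fun m => (p : L) ^ (j - i) * σ (v m) := by
    intro i j v hv
    funext m
    show (p : L) ^ (-i) * σ ((δ v) m) = _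
    rw [hδ j v hv]
    show (p : L) ^ (-i) * σ ((p : L) ^ j * v m) = _
    rw [map_mul, map_zpow₀, hσp, ← mul_assoc, ← zpow_add₀ hp0, neg_add_eq_sub]
  -- graded splitting of `F i ⊓ M`
  have hFN : ∀ i : ℤ, (F i).restrictScalars O ⊓ M ≤ ⨆ j ∈ {j : ℤ | i ≤ j}, N j := by
    intro i v hv
    obtain ⟨hvF, hvM⟩ := hv
    have hvM' : v ∈ (⨆ i : ℤ, (M ⊓ (D i).restrictScalars O) : Submodule O (Fin n → L)) := by
      rw [← hMgr]; exact hvM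
    rw [Submodule.mem_iSup_iff_exists_finsupp] at hvM'
    replace hvM := hvM'
    obtain ⟨c, hc, hsum⟩ := hvM
    rw [Finsupp.sum] at hsum
    have hsplit : ∑ j ∈ c.support.filter (fun j => i ≤ j), c j
        + ∑ j ∈ c.support.filter (fun j => ¬ i ≤ j), c j = v := by
      rw [← hsum]
      exact Finset.sum_filter_add_sum_filter_not _ _ _
    have ha : ∑ j ∈ c.support.filter (fun j => i ≤ j), c j ∈ ⨆ j ∈ {j : ℤ | i ≤ j}, N j := by
      refine Submodule.sum_mem _ fun j hj => ?_
      exact Submodule.mem_iSup_of_mem j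
        (Submodule.mem_iSup_of_mem (Finset.mem_filter.mp hj).2 (hc j))
    have haF : ∑ j ∈ c.support.filter (fun j => i ≤ j), c j ∈ F i := by
      refine Submodule.sum_mem _ fun j hj => ?_
      exact Submodule.mem_iSup_of_mem j
        (Submodule.mem_iSup_of_mem (Finset.mem_filter.mp hj).2 (hc j).2)
    have hb2 : ∑ j ∈ c.support.filter (fun j => ¬ i ≤ j), c j
        ∈ ⨆ j ∈ {j : ℤ | ¬ i ≤ j}, D j := by
      refine Submodule.sum_mem _ fun j hj => ?_
      exact Submodule.mem_iSup_of_mem j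
        (Submodule.mem_iSup_of_mem (Finset.mem_filter.mp hj).2 (hc j).2)
    have hb1 : ∑ j ∈ c.support.filter (fun j => ¬ i ≤ j), c j ∈ F i := by
      have h4 : ∑ j ∈ c.support.filter (fun j => ¬ i ≤ j), c j
          = v - ∑ j ∈ c.support.filter (fun j => i ≤ j), c j := by
        rw [← hsplit]; ring
      rw [h4]
      exact Submodule.sub_mem _ hvF haF
    have hbd : Disjoint (⨆ j ∈ {j : ℤ | i ≤ j}, D j) (⨆ j ∈ {j : ℤ | ¬ i ≤ j}, D j) := by
      refine aux_disjoint_biSup_biSup hD.submodule_iSupIndep ?_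
      rw [Set.disjoint_left]
      intro a ha1 ha2
      exact ha2 ha1
    have hb0 : ∑ j ∈ c.support.filter (fun j => ¬ i ≤ j), c j = 0 :=
      Submodule.disjoint_def.mp hbd _ hb1 hb2
    rw [← hsplit, hb0, add_zero]
    exact ha
  -- identifying the spans with images of semilinear maps
  have hS : ∀ i : ℤ, Submodule.span O
      ((fun v : Fin n → L => ((p : L) ^ (-i)) • (fun j => σ (δ v j))) ''
        (((F i : Submodule L (Fin n → L)) : Set (Fin n → L)) ∩ (M : Set (Fin n → L))))
      = Submodule.map (g' i) ((F i).restrictScalars O ⊓ M) := by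
    intro i
    have h1 : ((F i : Submodule L (Fin n → L)) : Set (Fin n → L)) ∩ (M : Set (Fin n → L))
        = (((F i).restrictScalars O ⊓ M : Submodule O (Fin n → L)) : Set (Fin n → L)) := rfl
    have h2 : (fun v : Fin n → L => ((p : L) ^ (-i)) • (fun j => σ (δ v j))) = ⇑(g' i) := rfl
    rw [h1, h2, ← Submodule.map_coe, Submodule.span_eq]
  -- each piece lands in `map f' M`
  have claimA : ∀ i : ℤ, Submodule.map (g' i) ((F i).restrictScalars O ⊓ M)
      ≤ Submodule.map f' M := by
    intro i
    refine le_trans (Submodule.map_mono (hFN i)) ?_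
    rw [Submodule.map_iSup]
    refine iSup_le fun j => ?_
    rw [Submodule.map_iSup]
    refine iSup_le fun hj => ?_
    rintro x ⟨v, hv, rfl⟩
    have hvD : v ∈ D j := hv.2
    have hvM : v ∈ M := hv.1
    have hm0 : (((j - i).toNat : ℤ)) = j - i := Int.toNat_of_nonneg (sub_nonneg.mpr hj)
    refine ⟨((p : O) ^ (j - i).toNat) • v, M.smul_mem _ hvM, ?_⟩
    rw [hg i j v hvD]
    funext mm
    show σ ((((p : O) ^ (j - i).toNat) • v) mm) = (p : L) ^ (j - i) * σ (v mm)
    have h2 : (((p : O) ^ (j - i).toNat) • v) mm = (p : L) ^ (j - i).toNat * v mm := by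
      show ((p : O) ^ (j - i).toNat) • v mm = _
      rw [Algebra.smul_def, map_pow, map_natCast]
    rw [h2, map_mul, map_pow, hσp, ← zpow_natCast (p : L) ((j - i).toNat), hm0]
  -- the total sup is `map f' M`
  have claimB : Submodule.map f' M ≤ ⨆ i : ℤ, Submodule.map (g' i) ((F i).restrictScalars O ⊓ M) := by
    have h1 : Submodule.map f' M = ⨆ j : ℤ, Submodule.map f' (N j) := by
      conv_lhs => rw [hMgr]
      rw [Submodule.map_iSup]
    rw [h1]
    refine iSup_le fun j => le_trans ?_ (le_iSup _ j)
    rintro x ⟨v, hv, rfl⟩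
    refine ⟨v, ⟨?_, hv.1⟩, ?_⟩
    · exact Submodule.mem_iSup_of_mem j (Submodule.mem_iSup_of_mem (le_refl j) hv.2)
    · rw [hg j j v hv.2]
      funext mm
      show (p : L) ^ (j - j) * σ (v mm) = σ (v mm)
      rw [sub_self, zpow_zero, one_mul]
  have key : (⨆ i : ℤ, Submodule.map (g' i) ((F i).restrictScalars O ⊓ M))
      = Submodule.map f' M := le_antisymm (iSup_le claimA) claimB
  have h4 : (⨆ i : ℤ, Submodule.span O
      ((fun v : Fin n → L => ((p : L) ^ (-i)) • (fun j => σ (δ v j))) ''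
        (((⨆ j ∈ {j : ℤ | i ≤ j}, D j : Submodule L (Fin n → L)) : Set (Fin n → L))
          ∩ (M : Set (Fin n → L)))))
      = Submodule.map f' M := by
    rw [iSup_congr hS]
    exact key
  have h5 : (fun v : Fin n → L => fun j => σ (v j)) '' (M : Set (Fin n → L))
      = ((Submodule.map f' M : Submodule O (Fin n → L)) : Set (Fin n → L)) := rfl
  rw [h4]
  constructor
  · intro h
    rw [h5]
    exact (SetLike.ext'_iff.mp h.symm)
  · intro h
    exact (SetLike.ext' (h5.symm.trans h)).symm
end

section
/- With E, U, ψ as below, there is no ℤ_p-lattice Λ in U that is an O_E-submodule of U and is homothetic to its dual lattice, i.e. such that Λ* = c·Λ for some c ∈ ℚ_p^×. -/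
/-!
An `O_E`-stable lattice `Λ` is free over the discrete valuation ring `O_E` (uniformizer `p`), so
`Λ = T (O_E × O_E)` for an `E`-linear automorphism `T` of `U`. On the corresponding `ℤ_p`-basis
the Gram matrix of `ψ` has determinant `N(det T)² · p²`, and `N(det T)` has even valuation
because `E/ℚ_p` is unramified. If `Λ* = c • Λ`, then `c` times the Gram matrix lies in
`GL₄(ℤ_p)`, so `4 v(c) + 2 v(N(det T)) + 2 = 0`, which is impossible modulo `4`.
-/

open Module Submodule
open LinearMap (BilinForm)
open scoped Pointwise Matrix Kronecker

theorem Set.range_fin_two {α : Type*} (f : Fin 2 → α) : Set.range f = {f 0, f 1} := by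
  ext
  simp [Fin.exists_fin_two, eq_comm]

theorem Matrix.det_mem_range_algebraMap {R S ι : Type*} [CommRing R] [CommRing S] [Algebra R S]
    [Fintype ι] [DecidableEq ι] {M : Matrix ι ι S}
    (hM : ∀ i j, M i j ∈ Set.range (algebraMap R S)) :
    M.det ∈ Set.range (algebraMap R S) := by
  choose N hN using hM
  refine ⟨(Matrix.of N).det, ?_⟩
  rw [RingHom.map_det]
  congr
  ext i j
  exact hN i j

theorem LinearMap.BilinForm.det_toMatrix_basis_map {K V ι : Type*} [CommRing K]
    [AddCommGroup V] [Module K V] [Fintype ι] [DecidableEq ι] (B : BilinForm K V)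
    (b : Basis ι K V) (f : V ≃ₗ[K] V) :
    (BilinForm.toMatrix (b.map f) B).det =
      LinearMap.det (f : V →ₗ[K] V) ^ 2 * (BilinForm.toMatrix b B).det := by
  have hP : b.toMatrix (b.map f) = LinearMap.toMatrix b b f := by
    ext i j
    simp [Basis.toMatrix_apply, LinearMap.toMatrix_apply]
  rw [← BilinForm.toMatrix_mul_basis_toMatrix b, Matrix.det_mul, Matrix.det_mul,
    Matrix.det_transpose, hP, LinearMap.det_toMatrix]
  ring

theorem Submodule.IsLattice.exists_basis_eq_span {R K V : Type*} [CommRing R] [IsDomain R]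
    [IsPrincipalIdealRing R] [Field K] [Algebra R K] [IsFractionRing R K] [AddCommGroup V]
    [Module K V] [Module R V] [IsScalarTower R K V] [FiniteDimensional K V]
    (M : Submodule R V) [IsLattice K M] :
    ∃ b : Basis (Fin (finrank K V)) K V, M = span R (Set.range b) := by
  let B := Module.Free.chooseBasis R M
  let b := B.extendOfIsLattice K
  refine ⟨b.reindex (Fintype.equivFinOfCardEq (finrank_eq_card_basis b).symm), ?_⟩
  have hb : ⇑b = M.subtype ∘ B := funext (B.extendOfIsLattice_apply K)
  rw [Basis.range_reindex, hb, Set.range_comp, ← Submodule.map_span, B.span_eq,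
    Submodule.map_subtype_top]

namespace Padic

variable {p : ℕ} [Fact p.Prime]

theorem valuation_eq_zero_of_mul_eq_one {x y : ℚ_[p]}
    (hx : x ∈ Set.range (algebraMap ℤ_[p] ℚ_[p]))
    (hy : y ∈ Set.range (algebraMap ℤ_[p] ℚ_[p]))
    (hxy : x * y = 1) : x.valuation = 0 := by
  obtain ⟨x, rfl⟩ := hx
  obtain ⟨y, rfl⟩ := hy
  have hv := valuation_mul (left_ne_zero_of_mul_eq_one hxy) (right_ne_zero_of_mul_eq_one hxy)
  rw [hxy, valuation_one] at hv
  have hx0 := (norm_le_one_iff_val_nonneg _).mp x.norm_le_one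
  have hy0 := (norm_le_one_iff_val_nonneg _).mp y.norm_le_one
  simp only [PadicInt.algebraMap_apply] at hv ⊢
  omega

end Padic

section PadicLattice

variable {p : ℕ} [Fact p.Prime] {V ι : Type*} [AddCommGroup V] [Module ℚ_[p] V]
  [Module ℤ_[p] V] [IsScalarTower ℤ_[p] ℚ_[p] V] [Fintype ι] [DecidableEq ι]

theorem Module.Basis.valuation_det_toMatrix_of_span_eq (b b' : Basis ι ℚ_[p] V)
    (h : span ℤ_[p] (Set.range b) = span ℤ_[p] (Set.range b')) :
    (b.toMatrix b').det.valuation = 0 := by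
  have integral : ∀ b b' : Basis ι ℚ_[p] V,
      span ℤ_[p] (Set.range b) = span ℤ_[p] (Set.range b') →
      (b.toMatrix b').det ∈ Set.range (algebraMap ℤ_[p] ℚ_[p]) := fun b b' h =>
    Matrix.det_mem_range_algebraMap fun i j =>
      (b.mem_span_iff_repr_mem ℤ_[p] (b' j)).mp (h ▸ subset_span (Set.mem_range_self j)) i
  refine Padic.valuation_eq_zero_of_mul_eq_one (integral b b' h) (integral b' b h.symm) ?_
  rw [← Matrix.det_mul, Basis.toMatrix_mul_toMatrix_flip, Matrix.det_one]

theorem LinearMap.BilinForm.valuation_det_toMatrix_of_dualSubmodule_eq_smul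
    {B : BilinForm ℚ_[p] V} (hB : B.Nondegenerate) (b : Basis ι ℚ_[p] V) {c : ℚ_[p]}
    (hc : c ≠ 0)
    (h : B.dualSubmodule (span ℤ_[p] (Set.range b)) = c • span ℤ_[p] (Set.range b)) :
    (c ^ Fintype.card ι * (BilinForm.toMatrix b B).det).valuation = 0 := by
  let cb := b.unitsSMul fun _ => Units.mk0 c hc
  have hcb : ⇑cb = c • ⇑b := by
    ext i
    simp [cb, Basis.unitsSMul_apply]
  have hspan : span ℤ_[p] (Set.range (B.dualBasis hB b)) = span ℤ_[p] (Set.range cb) := by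
    rw [← B.dualSubmodule_span_of_basis hB, h, smul_span, Set.smul_set_range, hcb]
    rfl
  have hmat : (B.dualBasis hB b).toMatrix cb = c • (BilinForm.toMatrix b B)ᵀ := by
    ext i j
    simp [Basis.toMatrix_apply, hcb, BilinForm.toMatrix_apply]
  rw [← Matrix.det_transpose, ← Matrix.det_smul, ← hmat]
  exact (B.dualBasis hB b).valuation_det_toMatrix_of_span_eq cb hspan

end PadicLattice

namespace UnramifiedQuadratic

section SymplecticForm

variable {p : ℕ} [Fact p.Prime] {E : Type*} [Field E] [Algebra ℚ_[p] E]

noncomputable def coordDet (bE : Basis (Fin 2) ℚ_[p] E) : BilinForm ℚ_[p] E :=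
  Matrix.toBilin bE !![0, 1; -1, 0]

noncomputable def symplecticForm (bE : Basis (Fin 2) ℚ_[p] E) : BilinForm ℚ_[p] (E × E) :=
  (p : ℚ_[p]) • (coordDet bE).comp (LinearMap.fst ℚ_[p] E E) (LinearMap.fst ℚ_[p] E E) +
    (coordDet bE).comp (LinearMap.snd ℚ_[p] E E) (LinearMap.snd ℚ_[p] E E)

variable (bE : Basis (Fin 2) ℚ_[p] E)

theorem coordDet_apply (x y : E) :
    coordDet bE x y = bE.repr x 0 * bE.repr y 1 - bE.repr x 1 * bE.repr y 0 := by
  simp [coordDet, Matrix.toBilin_apply, Fin.sum_univ_two]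
  ring

theorem symplecticForm_apply (u w : E × E) :
    symplecticForm bE u w =
      (p : ℚ_[p]) * (bE.repr u.1 0 * bE.repr w.1 1 - bE.repr u.1 1 * bE.repr w.1 0) +
        (bE.repr u.2 0 * bE.repr w.2 1 - bE.repr u.2 1 * bE.repr w.2 0) := by
  simp [symplecticForm, coordDet_apply]

theorem coe_dualSubmodule_symplecticForm [Algebra ℤ_[p] E] [IsScalarTower ℤ_[p] ℚ_[p] E]
    (Λ : Submodule ℤ_[p] (E × E)) :
    ((symplecticForm bE).dualSubmodule Λ : Set (E × E)) =
      {u : E × E | ∀ w ∈ Λ, ∃ z : ℤ_[p], (z : ℚ_[p]) =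
        (p : ℚ_[p]) * (bE.repr u.1 0 * bE.repr w.1 1 - bE.repr u.1 1 * bE.repr w.1 0)
          + (bE.repr u.2 0 * bE.repr w.2 1 - bE.repr u.2 1 * bE.repr w.2 0)} := by
  ext u
  simp [BilinForm.mem_dualSubmodule, Submodule.mem_one, symplecticForm_apply]

theorem toMatrix_symplecticForm :
    LinearMap.BilinForm.toMatrix (bE.smulTower (Basis.finTwoProd E)) (symplecticForm bE) =
      !![0, 1; -1, 0] ⊗ₖ Matrix.diagonal ![(p : ℚ_[p]), 1] := by
  ext ⟨j, i⟩ ⟨j', i'⟩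
  fin_cases i <;> fin_cases i' <;> fin_cases j <;> fin_cases j' <;>
    simp [LinearMap.BilinForm.toMatrix_apply, symplecticForm_apply]

theorem det_toMatrix_symplecticForm :
    (LinearMap.BilinForm.toMatrix (bE.smulTower (Basis.finTwoProd E)) (symplecticForm bE)).det =
      (p : ℚ_[p]) ^ 2 := by
  simp [toMatrix_symplecticForm, Matrix.det_kronecker, Matrix.det_fin_two_of]

theorem nondegenerate_symplecticForm : (symplecticForm bE).Nondegenerate := by
  rw [LinearMap.BilinForm.nondegenerate_iff_det_ne_zero (bE.smulTower (Basis.finTwoProd E)),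
    det_toMatrix_symplecticForm]
  exact pow_ne_zero _ (Nat.cast_ne_zero.mpr (Fact.out : p.Prime).ne_zero)

noncomputable def latticeBasis (T : (E × E) ≃ₗ[E] (E × E)) : Basis (Fin 2 × Fin 2) ℚ_[p] (E × E) :=
  (bE.smulTower (Basis.finTwoProd E)).map (T.restrictScalars ℚ_[p])

theorem latticeBasis_apply (T : (E × E) ≃ₗ[E] (E × E)) (ji : Fin 2 × Fin 2) :
    latticeBasis bE T ji = bE ji.1 • T (Basis.finTwoProd E ji.2) := by
  simp [latticeBasis]

theorem det_toMatrix_latticeBasis (T : (E × E) ≃ₗ[E] (E × E)) :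
    (LinearMap.BilinForm.toMatrix (latticeBasis bE T) (symplecticForm bE)).det =
      Algebra.norm ℚ_[p] (LinearMap.det (T : (E × E) →ₗ[E] (E × E))) ^ 2 *
        (p : ℚ_[p]) ^ 2 := by
  have := Module.Free.of_basis bE
  rw [latticeBasis, LinearMap.BilinForm.det_toMatrix_basis_map, det_toMatrix_symplecticForm,
    ← LinearMap.det_restrictScalars]
  rfl

theorem dualSubmodule_span_latticeBasis_ne_smul [Algebra ℤ_[p] E]
    [IsScalarTower ℤ_[p] ℚ_[p] E] (T : (E × E) ≃ₗ[E] (E × E))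
    (hT : Even (Algebra.norm ℚ_[p] (LinearMap.det (T : (E × E) →ₗ[E] (E × E)))).valuation)
    {c : ℚ_[p]} (hc : c ≠ 0) :
    (symplecticForm bE).dualSubmodule (span ℤ_[p] (Set.range (latticeBasis bE T))) ≠
      c • span ℤ_[p] (Set.range (latticeBasis bE T)) := by
  intro h
  have hval := LinearMap.BilinForm.valuation_det_toMatrix_of_dualSubmodule_eq_smul
    (nondegenerate_symplecticForm bE) _ hc h
  have := Module.Finite.of_basis bE
  have hN : Algebra.norm ℚ_[p] (LinearMap.det (T : (E × E) →ₗ[E] (E × E))) ≠ 0 :=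
    Algebra.norm_ne_zero_iff.mpr (LinearEquiv.isUnit_det' T).ne_zero
  have hp : (p : ℚ_[p]) ≠ 0 := Nat.cast_ne_zero.mpr (Fact.out : p.Prime).ne_zero
  rw [det_toMatrix_latticeBasis, Padic.valuation_mul (pow_ne_zero _ hc)
    (mul_ne_zero (pow_ne_zero _ hN) (pow_ne_zero _ hp)),
    Padic.valuation_mul (pow_ne_zero _ hN) (pow_ne_zero _ hp)] at hval
  simp only [Padic.valuation_pow, Padic.valuation_p, Fintype.card_prod, Fintype.card_fin] at hval
  obtain ⟨k, hk⟩ := hT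
  -- `hval` now reads `4 v(c) + 4 k + 2 = 0`, which is impossible modulo 4
  omega

end SymplecticForm

section IntegralClosure

variable {p : ℕ} [Fact p.Prime] {E : Type*} [Field E] [Algebra ℤ_[p] E]

local notation "𝒪" => integralClosure ℤ_[p] E

theorem isLocalRing_integralClosure (hunram : (Ideal.span {(p : 𝒪)}).IsMaximal) :
    IsLocalRing 𝒪 := by
  refine IsLocalRing.of_unique_max_ideal ⟨_, hunram, fun m hm => ?_⟩
  have hcomap : m.comap (algebraMap ℤ_[p] 𝒪) = IsLocalRing.maximalIdeal ℤ_[p] :=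
    IsLocalRing.eq_maximalIdeal (Ideal.isMaximal_comap_of_isIntegral_of_isMaximal m)
  have hp : (p : ℤ_[p]) ∈ m.comap (algebraMap ℤ_[p] 𝒪) := by
    rw [hcomap, PadicInt.maximalIdeal_eq_span_p]
    exact Ideal.mem_span_singleton_self _
  rw [Ideal.mem_comap, map_natCast] at hp
  exact (hunram.eq_of_le hm.ne_top ((Ideal.span_singleton_le_iff_mem m).mpr hp)).symm

variable [Algebra ℚ_[p] E] {bE : Basis (Fin 2) ℚ_[p] E}

theorem isNoetherianRing_integralClosure
    (hbE : span ℤ_[p] (Set.range bE) = Subalgebra.toSubmodule 𝒪) :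
    IsNoetherianRing 𝒪 := by
  have : Module.Finite ℤ_[p] (Subalgebra.toSubmodule 𝒪) :=
    Module.Finite.iff_fg.mpr (hbE ▸ Submodule.fg_span (Set.finite_range bE))
  exact isNoetherian_of_tower ℤ_[p] inferInstance

theorem basis_mem_integralClosure
    (hbE : span ℤ_[p] (Set.range bE) = Subalgebra.toSubmodule 𝒪) (i : Fin 2) :
    bE i ∈ 𝒪 := by
  rw [← Subalgebra.mem_toSubmodule, ← hbE]
  exact subset_span (Set.mem_range_self i)

theorem span_range_basis_integralClosure_eq_top
    (hbE : span ℤ_[p] (Set.range bE) = Subalgebra.toSubmodule 𝒪) :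
    span ℤ_[p] (Set.range fun i => (⟨bE i, basis_mem_integralClosure hbE i⟩ : 𝒪)) = ⊤ := by
  apply Submodule.map_injective_of_injective (f := (Subalgebra.toSubmodule 𝒪).subtype)
    Subtype.val_injective
  rw [Submodule.map_span, ← Set.range_comp, Submodule.map_top, Submodule.range_subtype]
  exact hbE

theorem isDiscreteValuationRing_integralClosure
    (hbE : span ℤ_[p] (Set.range bE) = Subalgebra.toSubmodule 𝒪)
    (hunram : (Ideal.span {(p : 𝒪)}).IsMaximal) :
    IsDiscreteValuationRing 𝒪 := by
  have := isLocalRing_integralClosure hunram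
  have := isNoetherianRing_integralClosure hbE
  have hmax : IsLocalRing.maximalIdeal 𝒪 = Ideal.span {(p : 𝒪)} :=
    (IsLocalRing.eq_maximalIdeal hunram).symm
  have hp : (p : 𝒪) ≠ 0 := fun h => by
    have := congrArg (algebraMap 𝒪 E) h
    rw [map_natCast, map_zero, ← map_natCast (algebraMap ℚ_[p] E)] at this
    exact Nat.cast_ne_zero.mpr (Fact.out : p.Prime).ne_zero ((map_eq_zero _).mp this)
  have hnf : ¬ IsField 𝒪 := by
    rw [IsLocalRing.isField_iff_maximalIdeal_eq, hmax, Ideal.span_singleton_eq_bot]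
    exact hp
  have hprinc : (IsLocalRing.maximalIdeal 𝒪).IsPrincipal := ⟨⟨p, hmax⟩⟩
  exact ((IsDiscreteValuationRing.TFAE 𝒪 hnf).out 0 4).mpr hprinc

variable [IsScalarTower ℤ_[p] ℚ_[p] E]

theorem mem_integralClosure_iff_repr_mem
    (hbE : span ℤ_[p] (Set.range bE) = Subalgebra.toSubmodule 𝒪) {x : E} :
    x ∈ 𝒪 ↔ ∀ i, bE.repr x i ∈ Set.range (algebraMap ℤ_[p] ℚ_[p]) := by
  rw [← Subalgebra.mem_toSubmodule, ← hbE]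
  exact bE.mem_span_iff_repr_mem ℤ_[p] x

theorem norm_mem_range_algebraMap_of_mem
    (hbE : span ℤ_[p] (Set.range bE) = Subalgebra.toSubmodule 𝒪) {x : E} (hx : x ∈ 𝒪) :
    Algebra.norm ℚ_[p] x ∈ Set.range (algebraMap ℤ_[p] ℚ_[p]) := by
  rw [Algebra.norm_eq_matrix_det bE]
  refine Matrix.det_mem_range_algebraMap fun i j => ?_
  rw [Algebra.leftMulMatrix_eq_repr_mul]
  exact (mem_integralClosure_iff_repr_mem hbE).mp (mul_mem hx (basis_mem_integralClosure hbE j)) i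

theorem valuation_norm_of_isUnit
    (hbE : span ℤ_[p] (Set.range bE) = Subalgebra.toSubmodule 𝒪) {u : 𝒪} (hu : IsUnit u) :
    (Algebra.norm ℚ_[p] (algebraMap 𝒪 E u)).valuation = 0 := by
  obtain ⟨u, rfl⟩ := hu
  refine Padic.valuation_eq_zero_of_mul_eq_one (norm_mem_range_algebraMap_of_mem hbE u.1.2)
    (norm_mem_range_algebraMap_of_mem hbE u⁻¹.1.2) ?_
  rw [← map_mul, ← map_one (Algebra.norm ℚ_[p] (S := E))]
  exact congrArg _ (congrArg Subtype.val u.mul_inv)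

theorem even_valuation_norm_algebraMap
    (hbE : span ℤ_[p] (Set.range bE) = Subalgebra.toSubmodule 𝒪)
    (hunram : (Ideal.span {(p : 𝒪)}).IsMaximal) {a : 𝒪}
    (ha : a ≠ 0) : Even (Algebra.norm ℚ_[p] (algebraMap 𝒪 E a)).valuation := by
  have := isLocalRing_integralClosure hunram
  have := isDiscreteValuationRing_integralClosure hbE hunram
  have := Module.Finite.of_basis bE
  have hirr : Irreducible (p : 𝒪) := (IsDiscreteValuationRing.irreducible_iff_uniformizer _).mpr
    (IsLocalRing.eq_maximalIdeal hunram).symm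
  have hrank : finrank ℚ_[p] E = 2 := by simp [finrank_eq_card_basis bE]
  have hp : (p : ℚ_[p]) ≠ 0 := Nat.cast_ne_zero.mpr (Fact.out : p.Prime).ne_zero
  obtain ⟨n, u, rfl⟩ := IsDiscreteValuationRing.eq_unit_mul_pow_irreducible ha hirr
  have hpE : algebraMap 𝒪 E p = algebraMap ℚ_[p] E p := by simp
  rw [map_mul, map_pow, hpE, map_mul, map_pow, Algebra.norm_algebraMap, hrank,
    Padic.valuation_mul (Algebra.norm_ne_zero_iff.mpr (by simp))
      (pow_ne_zero _ (pow_ne_zero _ hp)),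
    valuation_norm_of_isUnit hbE u.isUnit, Padic.valuation_pow, Padic.valuation_pow,
    Padic.valuation_p]
  exact ⟨n, by ring⟩

theorem even_valuation_norm
    (hbE : span ℤ_[p] (Set.range bE) = Subalgebra.toSubmodule 𝒪)
    (hunram : (Ideal.span {(p : 𝒪)}).IsMaximal) {x : E} (hx : x ≠ 0) :
    Even (Algebra.norm ℚ_[p] x).valuation := by
  have := Module.Finite.of_basis bE
  have := integralClosure.isFractionRing_of_finite_extension (A := ℤ_[p]) ℚ_[p] E
  obtain ⟨⟨a, s⟩, hxs⟩ := IsLocalization.surj (nonZeroDivisors 𝒪) x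
  dsimp only at hxs
  have hs0 : (s : 𝒪) ≠ 0 := nonZeroDivisors.ne_zero s.2
  have ha0 : a ≠ 0 := by
    rintro rfl
    simp [hx, hs0] at hxs
  have hv := congrArg Padic.valuation (congrArg (Algebra.norm ℚ_[p]) hxs)
  rw [map_mul, Padic.valuation_mul (Algebra.norm_ne_zero_iff.mpr hx)
    (Algebra.norm_ne_zero_iff.mpr (by simp [hs0]))] at hv
  obtain ⟨m, hm⟩ := even_valuation_norm_algebraMap hbE hunram ha0
  obtain ⟨k, hk⟩ := even_valuation_norm_algebraMap hbE hunram hs0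
  exact ⟨m - k, by omega⟩

theorem exists_basis_of_isLattice
    (hbE : span ℤ_[p] (Set.range bE) = Subalgebra.toSubmodule 𝒪)
    (hunram : (Ideal.span {(p : 𝒪)}).IsMaximal)
    (Λ : Submodule ℤ_[p] (E × E)) [IsLattice ℚ_[p] Λ] (hΛ : ∀ a ∈ 𝒪, ∀ v ∈ Λ, a • v ∈ Λ) :
    ∃ b : Basis (Fin 2) E (E × E),
      Λ = span ℤ_[p] (Set.range fun ji : Fin 2 × Fin 2 => bE ji.1 • b ji.2) := by
  have := isDiscreteValuationRing_integralClosure hbE hunram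
  have := Module.Finite.of_basis bE
  have := integralClosure.isFractionRing_of_finite_extension (A := ℤ_[p]) ℚ_[p] E
  let ΛO : Submodule 𝒪 (E × E) := { Λ with smul_mem' := fun a _ hv => hΛ a a.2 _ hv }
  have : IsLattice E ΛO :=
    { fg := FG.of_restrictScalars ℤ_[p] (IsLattice.fg (M := Λ))
      span_eq_top := eq_top_iff.mpr ((IsLattice.span_eq_top (M := Λ)).symm.le.trans
        (span_le_restrictScalars ℚ_[p] E _)) }
  obtain ⟨b, hb⟩ := IsLattice.exists_basis_eq_span (K := E) ΛO
  let b' := b.reindex (finCongr (by simp : finrank E (E × E) = 2))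
  refine ⟨b', ?_⟩
  have hrange : (Set.range fun ji : Fin 2 × Fin 2 => bE ji.1 • b' ji.2) =
      (Set.range fun i => (⟨bE i, basis_mem_integralClosure hbE i⟩ : 𝒪)) • Set.range b' := by
    rw [Set.range_smul_range]
    rfl
  rw [hrange, span_smul_of_span_eq_top (span_range_basis_integralClosure_eq_top hbE),
    Basis.range_reindex, ← hb]
  rfl

end IntegralClosure

end UnramifiedQuadratic

open UnramifiedQuadratic

theorem no_selfdual_up_to_homothety_OE_lattice_general
    (p : ℕ) [Fact p.Prime]
    (E : Type*) [Field E] [Algebra ℚ_[p] E] [Algebra ℤ_[p] E]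
    [IsScalarTower ℤ_[p] ℚ_[p] E]
    -- unramified : the maximal ideal of O_E is generated by p :
    (hunram : (Ideal.span {(p : integralClosure ℤ_[p] E)}).IsMaximal)
    -- a ℤ_p-basis (e₁, e₂) = (bE 0, bE 1) of O_E :
    (bE : Module.Basis (Fin 2) ℚ_[p] E)
    (hbE : Submodule.span ℤ_[p] {bE 0, bE 1}
      = Subalgebra.toSubmodule (integralClosure ℤ_[p] E)) :
    ¬ ∃ Λ : Submodule ℤ_[p] (E × E),
      -- Λ is a ℤ_p-lattice in U = E × E :
      Λ.FG ∧ Submodule.span ℚ_[p] (Λ : Set (E × E)) = ⊤ ∧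
      -- Λ is an O_E-submodule :
      (∀ a : E, a ∈ integralClosure ℤ_[p] E → ∀ v ∈ Λ, a • v ∈ Λ) ∧
      -- Λ is homothetic to its dual lattice Λ* = {u | ψ(u, w) ∈ ℤ_p ∀ w ∈ Λ} :
      ∃ c : ℚ_[p], c ≠ 0 ∧
        {u : E × E | ∀ w ∈ Λ, ∃ z : ℤ_[p], (z : ℚ_[p]) =
            (p : ℚ_[p]) * (bE.repr u.1 0 * bE.repr w.1 1 - bE.repr u.1 1 * bE.repr w.1 0)
            + (bE.repr u.2 0 * bE.repr w.2 1 - bE.repr u.2 1 * bE.repr w.2 0)}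
          = (fun v : E × E => c • v) '' (Λ : Set (E × E)) := by
  rintro ⟨Λ, hFG, hspan, hO, c, hc, hdual⟩
  rw [← Set.range_fin_two] at hbE
  have : IsLattice ℚ_[p] Λ := ⟨hFG, hspan⟩
  obtain ⟨b, hb⟩ := exists_basis_of_isLattice hbE hunram Λ hO
  let T := (Basis.finTwoProd E).equiv b (Equiv.refl _)
  have hΛ : Λ = span ℤ_[p] (Set.range (latticeBasis bE T)) := by
    rw [hb]
    congr
    funext ji
    simp [T, latticeBasis_apply, Basis.equiv_apply]
  refine dualSubmodule_span_latticeBasis_ne_smul bE T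
    (even_valuation_norm hbE hunram (LinearEquiv.isUnit_det' T).ne_zero) hc ?_
  rw [← hΛ]
  apply SetLike.coe_injective
  rw [coe_dualSubmodule_symplecticForm, hdual, coe_pointwise_smul, Set.image_smul]

/-- Remark 1.3 of the paper: for the 4-dimensional symplectic space
`U = E × E` (with `E/ℚ_p` quadratic unramified) and the form
`ψ((x,x'),(y,y')) = p·d(x,y) + d(x',y')`, there is no ℤ_p-lattice in `U` which is an
`O_E`-submodule and homothetic to its dual lattice. -/
theorem no_selfdual_up_to_homothety_OE_lattice
    (p : ℕ) [Fact p.Prime]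
    (E : Type*) [Field E] [Algebra ℚ_[p] E] [Algebra ℤ_[p] E]
    [IsScalarTower ℤ_[p] ℚ_[p] E]
    (hdim : Module.finrank ℚ_[p] E = 2)
    -- unramified : the maximal ideal of O_E is generated by p :
    (hunram : (Ideal.span {(p : integralClosure ℤ_[p] E)}).IsMaximal)
    -- a ℤ_p-basis (e₁, e₂) = (bE 0, bE 1) of O_E :
    (bE : Module.Basis (Fin 2) ℚ_[p] E)
    (hbE : Submodule.span ℤ_[p] {bE 0, bE 1}
      = Subalgebra.toSubmodule (integralClosure ℤ_[p] E)) :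
    ¬ ∃ Λ : Submodule ℤ_[p] (E × E),
      -- Λ is a ℤ_p-lattice in U = E × E :
      Λ.FG ∧ Submodule.span ℚ_[p] (Λ : Set (E × E)) = ⊤ ∧
      -- Λ is an O_E-submodule :
      (∀ a : E, a ∈ integralClosure ℤ_[p] E → ∀ v ∈ Λ, a • v ∈ Λ) ∧
      -- Λ is homothetic to its dual lattice Λ* = {u | ψ(u, w) ∈ ℤ_p ∀ w ∈ Λ} :
      ∃ c : ℚ_[p], c ≠ 0 ∧
        {u : E × E | ∀ w ∈ Λ, ∃ z : ℤ_[p], (z : ℚ_[p]) =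
            (p : ℚ_[p]) * (bE.repr u.1 0 * bE.repr w.1 1 - bE.repr u.1 1 * bE.repr w.1 0)
            + (bE.repr u.2 0 * bE.repr w.2 1 - bE.repr u.2 1 * bE.repr w.2 0)}
          = (fun v : E × E => c • v) '' (Λ : Set (E × E)) :=
  no_selfdual_up_to_homothety_OE_lattice_general p E hunram bE hbE
end
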